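/- arXiv:2501.12044 — 7 statements merged into one kernel-verified Lean document; each statement's English description precedes it below -/
import Mathlib

section
/- Let d ≥ 1 be an integer and let V be a nonempty finite set of points in ℤ^d. For each j ∈ {1,…,d}, let y_j = max{x ∈ ℤ : |{v ∈ V : v_j < x}| ≤ |V|/(2(d+1))} and z_j = min{x ∈ ℤ : |{v ∈ V : v_j > x}| ≤ |V|/(2(d+1))}; these are well-defined integers with y_j ≤ z_j. Then: (a) the axis-parallel box B = ∏_{j=1}^{d} [y_j, z_j] contains at least |V|/(d+1) points of V; (b) ∏_{j=1}^{d} (z_j − y_j + 1) ≥ |V|/(d+1); and (c) there exists a dimension i ∈ {1,…,d} with z_i − y_i + 1 ≥ (|V|/(d+1))^{1/d}. -/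
/-!
The thresholds `y j`, `z j` exist because the number of points of `V` to the left of `x` is
monotone in `x`, vanishes below `min v j` and equals `|V|` above `max v j`. Each of the `2d`
tails cut off by the box holds at most `|V|/(2(d+1))` points, so the box keeps at least
`|V| - d|V|/(d+1) = |V|/(d+1)` of them; `y j ≤ z j` because otherwise the two tails in
direction `j` would cover `V`. The box has `∏ (z j - y j + 1)` lattice points, and a product of
`d` nonnegative factors is at most the `d`-th power of the largest one.
-/

open Finset

section Quantiles

variable {α : Type*} (V : Finset α) (f : α → ℤ) {t : ℝ}

theorem exists_isGreatest_card_filter_lt_le (ht : 0 ≤ t) (htV : t < #V) :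
    ∃ y, IsGreatest {x : ℤ | (#{v ∈ V | f v < x} : ℝ) ≤ t} y := by
  have hV : V.Nonempty := card_pos.1 (by exact_mod_cast ht.trans_lt htV)
  obtain ⟨a, -, ha⟩ := V.exists_min_image f hV
  obtain ⟨b, -, hb⟩ := V.exists_max_image f hV
  have hbdd : ∀ x : ℤ, (#{v ∈ V | f v < x} : ℝ) ≤ t → x ≤ f b := by
    intro x hx
    by_contra! hbx
    rw [filter_true_of_mem fun v hv => (hb v hv).trans_lt hbx] at hx
    exact hx.not_gt htV
  have hmin : (#{v ∈ V | f v < f a} : ℝ) ≤ t := by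
    rwa [filter_false_of_mem fun v hv => (ha v hv).not_gt, card_empty, Nat.cast_zero]
  exact Int.exists_greatest_of_bdd ⟨f b, hbdd⟩ ⟨f a, hmin⟩

theorem exists_isLeast_card_filter_gt_le (ht : 0 ≤ t) (htV : t < #V) :
    ∃ z, IsLeast {x : ℤ | (#{v ∈ V | x < f v} : ℝ) ≤ t} z := by
  obtain ⟨y, hy, hmax⟩ := exists_isGreatest_card_filter_lt_le V (fun v => -f v) ht htV
  refine ⟨-y, by simpa [neg_lt] using hy, fun x hx => ?_⟩
  have := hmax (show -x ∈ _ by simpa [neg_lt_neg_iff] using hx)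
  omega

theorem card_le_card_filter_lt_add_card_filter_gt {y z : ℤ} (hzy : z < y) :
    #V ≤ #{v ∈ V | f v < y} + #{v ∈ V | z < f v} := by
  classical
  calc #V ≤ #({v ∈ V | f v < y} ∪ {v ∈ V | z < f v}) := by
        refine card_le_card fun v hv => ?_
        rcases lt_or_ge (f v) y with h | h
        · exact mem_union_left _ (mem_filter.2 ⟨hv, h⟩)
        · exact mem_union_right _ (mem_filter.2 ⟨hv, hzy.trans_le h⟩)
    _ ≤ _ := card_union_le _ _

end Quantiles

theorem card_sub_le_card_filter_mem_box {ι : Type*} [Fintype ι]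
    (V : Finset (ι → ℤ)) (y z : ι → ℤ) {t : ℝ}
    (hy : ∀ j, (#{v ∈ V | v j < y j} : ℝ) ≤ t) (hz : ∀ j, (#{v ∈ V | z j < v j} : ℝ) ≤ t) :
    (#V : ℝ) - Fintype.card ι * (2 * t) ≤ #{v ∈ V | ∀ j, y j ≤ v j ∧ v j ≤ z j} := by
  classical
  have hcover : #{v ∈ V | ¬ ∀ j, y j ≤ v j ∧ v j ≤ z j} ≤
      ∑ j, #({v ∈ V | v j < y j} ∪ {v ∈ V | z j < v j}) := by
    refine (card_le_card fun v hv => ?_).trans card_biUnion_le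
    obtain ⟨hvV, j, hj⟩ : v ∈ V ∧ ∃ j, y j ≤ v j → z j < v j := by simpa using hv
    refine mem_biUnion.2 ⟨j, mem_univ j, ?_⟩
    rcases lt_or_ge (v j) (y j) with h | h
    · exact mem_union_left _ (mem_filter.2 ⟨hvV, h⟩)
    · exact mem_union_right _ (mem_filter.2 ⟨hvV, hj h⟩)
  have hout : (#{v ∈ V | ¬ ∀ j, y j ≤ v j ∧ v j ≤ z j} : ℝ) ≤ Fintype.card ι * (2 * t) :=
    calc _ ≤ ∑ j, ((#{v ∈ V | v j < y j} : ℝ) + #{v ∈ V | z j < v j}) := by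
          exact_mod_cast hcover.trans (sum_le_sum fun j _ => card_union_le _ _)
      _ ≤ ∑ _j : ι, 2 * t := sum_le_sum fun j _ => by linarith [hy j, hz j]
      _ = _ := by simp
  have hsplit : (#V : ℝ) = #{v ∈ V | ∀ j, y j ≤ v j ∧ v j ≤ z j} +
      #{v ∈ V | ¬ ∀ j, y j ≤ v j ∧ v j ≤ z j} := by
    exact_mod_cast (card_filter_add_card_filter_not _).symm
  linarith

theorem card_filter_mem_box_le_prod {ι : Type*} [Fintype ι] [DecidableEq ι]
    (V : Finset (ι → ℤ)) {y z : ι → ℤ} (hyz : y ≤ z) :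
    (#{v ∈ V | ∀ j, y j ≤ v j ∧ v j ≤ z j} : ℤ) ≤ ∏ j, (z j - y j + 1) :=
  calc (#{v ∈ V | ∀ j, y j ≤ v j ∧ v j ≤ z j} : ℤ) ≤ #(Icc y z) := by
        refine Nat.cast_le.2 (card_le_card fun v hv => ?_)
        have hv := (mem_filter.1 hv).2
        exact mem_Icc.2 ⟨fun j => (hv j).1, fun j => (hv j).2⟩
    _ = ∏ j, (z j - y j + 1) := by
        rw [Pi.card_Icc, Nat.cast_prod]
        refine prod_congr rfl fun j _ => ?_
        rw [Int.card_Icc, Int.toNat_of_nonneg (by linarith [hyz j])]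
        ring

theorem exists_rpow_inv_card_le_of_le_prod {ι : Type*} [Fintype ι] [Nonempty ι] {a : ι → ℝ}
    (ha : ∀ i, 0 ≤ a i) {A : ℝ} (hA : 0 ≤ A) (h : A ≤ ∏ i, a i) :
    ∃ i, A ^ (1 / (Fintype.card ι : ℝ)) ≤ a i := by
  obtain ⟨i, -, hi⟩ := univ.exists_max_image a univ_nonempty
  refine ⟨i, ?_⟩
  have hprod : A ≤ a i ^ Fintype.card ι :=
    calc A ≤ ∏ j, a j := h
      _ ≤ ∏ _j : ι, a i := prod_le_prod (fun j _ => ha j) fun j _ => hi j (mem_univ j)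
      _ = a i ^ Fintype.card ι := by rw [prod_const, card_univ]
  calc A ^ (1 / (Fintype.card ι : ℝ)) ≤ (a i ^ Fintype.card ι) ^ (1 / (Fintype.card ι : ℝ)) :=
        Real.rpow_le_rpow hA hprod (by positivity)
    _ = a i := by rw [one_div, Real.pow_rpow_inv_natCast (ha i) Fintype.card_ne_zero]

/-- For a nonempty finite set `V ⊂ ℤ^d`, the per-dimension quantile
coordinates `y_j` (largest `x` with at most `|V|/(2(d+1))` points strictly to the left)
and `z_j` (smallest `x` with at most `|V|/(2(d+1))` points strictly to the right)
are well-defined with `y_j ≤ z_j`; the box `∏ [y_j, z_j]` contains at least `|V|/(d+1)`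
points of `V`; its volume `∏ (z_j - y_j + 1)` is at least `|V|/(d+1)`; and some dimension
`i` has `z_i - y_i + 1 ≥ (|V|/(d+1))^{1/d}`. -/
theorem quantile_box_lemma (d : ℕ) (hd : 1 ≤ d)
    (V : Finset (Fin d → ℤ)) (hV : V.Nonempty) :
    ∃ y z : Fin d → ℤ,
      (∀ j : Fin d, IsGreatest
        {x : ℤ | ((V.filter fun v => v j < x).card : ℝ) ≤ (V.card : ℝ) / (2 * ((d : ℝ) + 1))}
        (y j)) ∧
      (∀ j : Fin d, IsLeast
        {x : ℤ | ((V.filter fun v => x < v j).card : ℝ) ≤ (V.card : ℝ) / (2 * ((d : ℝ) + 1))}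
        (z j)) ∧
      (∀ j : Fin d, y j ≤ z j) ∧
      ((V.filter fun v => ∀ j : Fin d, y j ≤ v j ∧ v j ≤ z j).card : ℝ) ≥
        (V.card : ℝ) / ((d : ℝ) + 1) ∧
      (∏ j : Fin d, ((z j - y j + 1 : ℤ) : ℝ)) ≥ (V.card : ℝ) / ((d : ℝ) + 1) ∧
      (∃ i : Fin d, ((z i - y i + 1 : ℤ) : ℝ) ≥
        ((V.card : ℝ) / ((d : ℝ) + 1)) ^ ((1 : ℝ) / (d : ℝ))) := by
  set t : ℝ := #V / (2 * (d + 1))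
  have hV0 : (0 : ℝ) < #V := by exact_mod_cast hV.card_pos
  have hd1 : (1 : ℝ) ≤ d := by exact_mod_cast hd
  have ht0 : 0 ≤ t := by positivity
  have h2t : 2 * t = #V / (d + 1) := by simp only [t]; field_simp
  have h2tV : 2 * t < #V := by
    rw [h2t, div_lt_iff₀ (by positivity)]; nlinarith
  choose y hy using fun j : Fin d => exists_isGreatest_card_filter_lt_le V (· j) ht0 (by linarith)
  choose z hz using fun j : Fin d => exists_isLeast_card_filter_gt_le V (· j) ht0 (by linarith)
  have hyz : ∀ j, y j ≤ z j := fun j => le_of_not_gt fun hzy => by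
    have hlt : (#{v ∈ V | v j < y j} : ℝ) ≤ t := (hy j).1
    have hgt : (#{v ∈ V | z j < v j} : ℝ) ≤ t := (hz j).1
    have := Nat.cast_le (α := ℝ) |>.2 (card_le_card_filter_lt_add_card_filter_gt V (· j) hzy)
    push_cast at this
    linarith
  have hbox := card_sub_le_card_filter_mem_box V y z (fun j => (hy j).1) fun j => (hz j).1
  rw [Fintype.card_fin, h2t, show (#V : ℝ) - d * (#V / (d + 1)) = #V / (d + 1) by
    field_simp; ring] at hbox
  have hvol : (#V : ℝ) / (d + 1) ≤ ∏ j, ((z j - y j + 1 : ℤ) : ℝ) :=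
    hbox.trans (by exact_mod_cast card_filter_mem_box_le_prod V hyz)
  have : Nonempty (Fin d) := ⟨⟨0, hd⟩⟩
  -- the statement decides `∀ j : Fin d` by `Nat.decidableForallFin`, `hbox` by `Fintype`
  refine ⟨y, z, hy, hz, hyz, by convert hbox using 4, hvol, ?_⟩
  simpa using exists_rpow_inv_card_le_of_le_prod
    (fun j => Int.cast_nonneg_iff.mpr (by linarith [hyz j])) (by positivity) hvol
end

section
/- (Binary Partition Lemma) Let d ≥ 2 and c ≥ 1 be integers, and let V be a finite set of points in ℕ^d such that 8(d+1)·c ≤ (|V|/(d+1))^{1/d}. Then there exist a dimension i ∈ {1,…,d} and an integer x such that, setting V_left = {v ∈ V : v_i ≤ x − 1}, V_right = {v ∈ V : v_i ≥ x + c}, and S = {v ∈ V : x ≤ v_i ≤ x + c − 1}, one has: |V_left| ≥ |V|/(4(d+1)), |V_right| ≥ |V|/(4(d+1)), and |S| ≤ 2c·(1+d)^{1/d}·|V|^{1 − 1/d}. -/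
/-!
Take `t = |V|/(4(d+1))`. In every coordinate `i` choose a lower cut `aᵢ` and an upper cut `bᵢ`
so that at least `t` points satisfy `vᵢ ≤ aᵢ` (resp. `vᵢ ≥ bᵢ`) but fewer than `t` satisfy
`vᵢ < aᵢ` (resp. `vᵢ > bᵢ`). The box `∏ [aᵢ, bᵢ]` then keeps at least `|V| - 2dt ≥ |V|/(d+1)`
points, so one of its sides has length `W ≥ (|V|/(d+1))^{1/d}`. Strictly between the two cuts of
that side there are at least `W/2` positions for a slab of width `c`; every point lies in at most
`c` of these slabs, so the thinnest one contains at most `2c|V|/W` points, and each side of it still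
contains the `t` points beyond the corresponding cut.
-/

open Finset Function

section Cuts

variable {α β : Type*} [LinearOrder β] (V : Finset α) (f : α → β) {t : ℝ}

theorem exists_lower_cut (ht : 0 < t) (htV : t ≤ #V) :
    ∃ a, t ≤ #{v ∈ V | f v ≤ a} ∧ (#{v ∈ V | f v < a} : ℝ) < t := by
  have hV : V.Nonempty := by rw [← card_pos]; exact_mod_cast ht.trans_le htV
  set S := (V.image f).filter fun y => t ≤ #{v ∈ V | f v ≤ y}
  have hS : S.Nonempty := by
    obtain ⟨v, hv, hmax⟩ := V.exists_max_image f hV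
    refine ⟨f v, mem_filter.2 ⟨mem_image_of_mem f hv, ?_⟩⟩
    rwa [filter_true_of_mem hmax]
  refine ⟨S.min' hS, (mem_filter.1 (S.min'_mem hS)).2, ?_⟩
  by_contra! h
  obtain ⟨u, hu, humax⟩ := exists_max_image {v ∈ V | f v < S.min' hS} f
    (by rw [← card_pos]; exact_mod_cast ht.trans_le h)
  have hbelow : {v ∈ V | f v < S.min' hS} ⊆ {v ∈ V | f v ≤ f u} := fun v hv =>
    mem_filter.2 ⟨(mem_filter.1 hv).1, humax v hv⟩
  have huS : f u ∈ S := mem_filter.2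
    ⟨mem_image_of_mem f (mem_filter.1 hu).1, h.trans (by exact_mod_cast card_le_card hbelow)⟩
  exact (mem_filter.1 hu).2.not_ge (S.min'_le _ huS)

theorem exists_upper_cut (ht : 0 < t) (htV : t ≤ #V) :
    ∃ b, t ≤ #{v ∈ V | b ≤ f v} ∧ (#{v ∈ V | b < f v} : ℝ) < t :=
  exists_lower_cut (β := βᵒᵈ) V (OrderDual.toDual ∘ f) ht htV

end Cuts

theorem card_le_card_filter_forall_add_sum {α ι : Type*} [Fintype ι] (V : Finset α)
    (p : ι → α → Prop) [∀ i, DecidablePred (p i)] :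
    #V ≤ #{v ∈ V | ∀ i, p i v} + ∑ i, #{v ∈ V | ¬ p i v} := by
  classical
  have hcover : V ⊆ {v ∈ V | ∀ i, p i v} ∪ univ.biUnion fun i => {v ∈ V | ¬ p i v} := by
    intro v hv
    by_cases h : ∀ i, p i v
    · exact mem_union_left _ (mem_filter.2 ⟨hv, h⟩)
    · obtain ⟨i, hi⟩ := not_forall.1 h
      exact mem_union_right _ (mem_biUnion.2 ⟨i, mem_univ i, mem_filter.2 ⟨hv, hi⟩⟩)
  exact (card_le_card hcover).trans <| (card_union_le _ _).trans <|
    Nat.add_le_add_left card_biUnion_le _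

theorem card_sub_le_card_filter_box {α ι β : Type*} [Fintype ι] [LinearOrder β] (V : Finset α)
    (g : α → ι → β) (a b : ι → β) {t : ℝ}
    (ha : ∀ i, (#{v ∈ V | g v i < a i} : ℝ) < t)
    (hb : ∀ i, (#{v ∈ V | b i < g v i} : ℝ) < t) :
    (#V : ℝ) - 2 * Fintype.card ι * t ≤ #{v ∈ V | ∀ i, a i ≤ g v i ∧ g v i ≤ b i} := by
  classical
  have houtside : ∀ i, #{v ∈ V | ¬ (a i ≤ g v i ∧ g v i ≤ b i)} ≤
      #{v ∈ V | g v i < a i} + #{v ∈ V | b i < g v i} := by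
    intro i
    refine (card_le_card fun v hv => ?_).trans (card_union_le _ _)
    simp only [mem_union, mem_filter, not_and_or, not_le] at hv ⊢
    tauto
  have hcover : (#V : ℝ) ≤ #{v ∈ V | ∀ i, a i ≤ g v i ∧ g v i ≤ b i} +
      ∑ i, ((#{v ∈ V | g v i < a i} : ℝ) + #{v ∈ V | b i < g v i}) := by
    exact_mod_cast
      (card_le_card_filter_forall_add_sum V fun i v => a i ≤ g v i ∧ g v i ≤ b i).trans
        (by gcongr with i; exact houtside i)
  have hsum : ∑ i, ((#{v ∈ V | g v i < a i} : ℝ) + #{v ∈ V | b i < g v i}) ≤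
      Fintype.card ι * t + Fintype.card ι * t := by
    simpa using sum_le_sum fun i (_ : i ∈ univ) => (add_lt_add (ha i) (hb i)).le
  linarith

theorem card_filter_box_le {α ι β : Type*} [Fintype ι] [DecidableEq ι] [LinearOrder β]
    [LocallyFiniteOrder β] (V : Finset α) (g : α → ι → β) (hg : Injective g) (a b : ι → β) :
    #{v ∈ V | ∀ i, a i ≤ g v i ∧ g v i ≤ b i} ≤ ∏ i, #(Icc (a i) (b i)) := by
  rw [← Fintype.card_piFinset]
  refine card_le_card_of_injOn g (fun v hv => ?_) hg.injOn
  rw [mem_coe, Fintype.mem_piFinset]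
  exact fun i => mem_Icc.2 ((mem_filter.1 hv).2 i)

theorem exists_rpow_one_div_card_le_of_le_prod {ι : Type*} [Fintype ι] [Nonempty ι] {m : ℝ}
    (hm : 0 ≤ m) (W : ι → ℝ) (hW : ∀ i, 0 ≤ W i) (h : m ≤ ∏ i, W i) :
    ∃ i, m ^ (1 / (Fintype.card ι : ℝ)) ≤ W i := by
  obtain ⟨i, hi⟩ := Finite.exists_max W
  refine ⟨i, ?_⟩
  have hprod : ∏ j, W j ≤ W i ^ Fintype.card ι := by
    simpa using prod_le_prod (fun j _ => hW j) fun j (_ : j ∈ univ) => hi j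
  calc m ^ (1 / (Fintype.card ι : ℝ))
      ≤ (W i ^ Fintype.card ι) ^ (1 / (Fintype.card ι : ℝ)) :=
        Real.rpow_le_rpow hm (h.trans hprod) (by positivity)
    _ = W i := by rw [one_div, Real.pow_rpow_inv_natCast (hW i) Fintype.card_ne_zero]

theorem exists_divider_of_cuts {α : Type*} (V : Finset α) (f : α → ℤ) {a b : ℤ} (c : ℕ)
    (hab : 2 * (c + 1) ≤ b - a + 1) :
    ∃ x, #{v ∈ V | f v ≤ a} ≤ #{v ∈ V | f v ≤ x - 1} ∧
      #{v ∈ V | b ≤ f v} ≤ #{v ∈ V | x + c ≤ f v} ∧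
      (b - a + 1) * #{v ∈ V | x ≤ f v ∧ f v ≤ x + c - 1} ≤ 2 * c * #V := by
  set X := Icc (a + 1) (b - c)
  obtain ⟨x, hx, hmin⟩ := X.exists_min_image (fun x => #{v ∈ V | x ≤ f v ∧ f v ≤ x + c - 1})
    (nonempty_Icc.2 (by omega))
  have hwindow :
      ∀ v ∈ V, #(X.bipartiteBelow (fun x v => x ≤ f v ∧ f v ≤ x + c - 1) v) ≤ c := by
    intro v _
    refine (card_le_card (t := Icc (f v - c + 1) (f v)) fun y hy => ?_).trans
      (by rw [Int.card_Icc]; omega)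
    rw [mem_bipartiteBelow] at hy
    rw [mem_Icc]
    omega
  have hcount := card_mul_le_card_mul (fun x v => x ≤ f v ∧ f v ≤ x + c - 1) hmin hwindow
  have hX : (#X : ℤ) = b - c - a := by simp [X, Int.card_Icc]; omega
  rw [mem_Icc] at hx
  refine ⟨x, card_le_card (monotone_filter_right _ fun v _ hv => by omega),
    card_le_card (monotone_filter_right _ fun v _ hv => by omega), ?_⟩
  have hcount' : (#X : ℤ) * #{v ∈ V | x ≤ f v ∧ f v ≤ x + c - 1} ≤ #V * c := by
    exact_mod_cast hcount
  calc (b - a + 1) * #{v ∈ V | x ≤ f v ∧ f v ≤ x + c - 1}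
      ≤ 2 * #X * #{v ∈ V | x ≤ f v ∧ f v ≤ x + c - 1} := by gcongr; omega
    _ ≤ 2 * c * #V := by linarith

theorem exists_coord_cuts_with_wide_gap {α ι : Type*} [Fintype ι] [DecidableEq ι]
    [Nonempty ι] (V : Finset α) (g : α → ι → ℤ) (hg : Injective g) {t m : ℝ}
    (ht : 0 < t) (hm : 0 < m) (hmV : m ≤ #V - 2 * Fintype.card ι * t) :
    ∃ i a b, t ≤ #{v ∈ V | g v i ≤ a} ∧ t ≤ #{v ∈ V | b ≤ g v i} ∧
      m ^ (1 / (Fintype.card ι : ℝ)) ≤ b - a + 1 := by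
  have htV : t ≤ #V := by
    have : (1 : ℝ) ≤ Fintype.card ι := by exact_mod_cast Fintype.card_pos
    nlinarith
  choose a ha_le ha_lt using fun i => exists_lower_cut V (fun v => g v i) ht htV
  choose b hb_le hb_lt using fun i => exists_upper_cut V (fun v => g v i) ht htV
  have hbox : m ≤ ∏ i, (#(Icc (a i) (b i)) : ℝ) :=
    hmV.trans <| (card_sub_le_card_filter_box V g a b ha_lt hb_lt).trans <| by
      exact_mod_cast card_filter_box_le V g hg a b
  obtain ⟨i, hi⟩ := exists_rpow_one_div_card_le_of_le_prod hm.le _ (fun _ => by positivity) hbox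
  refine ⟨i, a i, b i, ha_le i, hb_le i, ?_⟩
  have hpos : 0 < #(Icc (a i) (b i)) := by
    exact_mod_cast (Real.rpow_pos_of_pos hm _).trans_le hi
  rw [Int.card_Icc] at hi hpos
  have hW : ((b i + 1 - a i).toNat : ℝ) = b i - a i + 1 := by
    exact_mod_cast (show ((b i + 1 - a i).toNat : ℤ) = b i - a i + 1 by omega)
  rwa [hW] at hi

theorem div_add_one_le_sub_two_mul_mul_div {n d : ℝ} (hn : 0 ≤ n) (hd : 0 ≤ d) :
    n / (d + 1) ≤ n - 2 * d * (n / (4 * (d + 1))) := by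
  rw [div_le_iff₀ (by positivity)]
  field_simp
  nlinarith [mul_nonneg hn hd]

theorem ne_zero_and_pos_of_one_lt_rpow {n d : ℕ}
    (h : 1 < ((n : ℝ) / (d + 1)) ^ ((1 : ℝ) / d)) : d ≠ 0 ∧ 0 < n := by
  have hd : d ≠ 0 := by
    rintro rfl
    simp at h
  refine ⟨hd, Nat.pos_of_ne_zero fun hn => ?_⟩
  rw [hn, Nat.cast_zero, zero_div, Real.zero_rpow (by simp [hd])] at h
  exact zero_lt_one.not_gt h

theorem rpow_one_sub_mul_rpow_eq_div {x y : ℝ} (hx : 0 < x) (hy : 0 < y) (p : ℝ) :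
    x ^ (1 - p) * y ^ p = x / (x / y) ^ p := by
  rw [Real.div_rpow hx.le hy.le, Real.rpow_sub hx, Real.rpow_one]
  field_simp

theorem binary_partition_lemma_general (d c : ℕ) (hc : 1 ≤ c)
    (V : Finset (Fin d → ℕ))
    (hbig : 8 * ((d : ℝ) + 1) * (c : ℝ) ≤ ((V.card : ℝ) / ((d : ℝ) + 1)) ^ ((1 : ℝ) / (d : ℝ))) :
    ∃ (i : Fin d) (x : ℤ),
      ((V.filter fun v => (v i : ℤ) ≤ x - 1).card : ℝ) ≥ (V.card : ℝ) / (4 * ((d : ℝ) + 1)) ∧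
      ((V.filter fun v => x + (c : ℤ) ≤ (v i : ℤ)).card : ℝ) ≥
        (V.card : ℝ) / (4 * ((d : ℝ) + 1)) ∧
      ((V.filter fun v => x ≤ (v i : ℤ) ∧ (v i : ℤ) ≤ x + (c : ℤ) - 1).card : ℝ) ≤
        2 * (c : ℝ) * (1 + (d : ℝ)) ^ ((1 : ℝ) / (d : ℝ)) *
          (V.card : ℝ) ^ (1 - (1 : ℝ) / (d : ℝ)) := by
  have hc' : (1 : ℝ) ≤ c := by exact_mod_cast hc
  obtain ⟨hd, hV⟩ := ne_zero_and_pos_of_one_lt_rpow (n := #V) (d := d) <|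
    lt_of_lt_of_le (by nlinarith [(d.cast_nonneg : (0 : ℝ) ≤ d)]) hbig
  have : NeZero d := ⟨hd⟩
  set w := ((#V : ℝ) / (d + 1)) ^ ((1 : ℝ) / d)
  have hcentral :=
    div_add_one_le_sub_two_mul_mul_div (n := #V) (d := d) (by positivity) (by positivity)
  obtain ⟨i, a, b, ha, hb, hwidth⟩ := exists_coord_cuts_with_wide_gap V (fun v i => (v i : ℤ))
    Nat.cast_injective.comp_left (t := #V / (4 * (d + 1))) (m := #V / (d + 1))
    (by positivity) (by positivity) (by rwa [Fintype.card_fin])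
  rw [Fintype.card_fin] at hwidth
  obtain ⟨x, hleft, hright, hS⟩ := exists_divider_of_cuts V (fun v => (v i : ℤ)) c
    (a := a) (b := b) (by exact_mod_cast (show (2 * (c + 1) : ℝ) ≤ b - a + 1 by nlinarith))
  refine ⟨i, x, ha.trans (by exact_mod_cast hleft), hb.trans (by exact_mod_cast hright), ?_⟩
  have hS' : ((b - a + 1 : ℤ) : ℝ) * #{v ∈ V | x ≤ (v i : ℤ) ∧ (v i : ℤ) ≤ x + c - 1} ≤
      2 * c * #V := by exact_mod_cast hS
  have hw0 : 0 < w := by positivity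
  rw [mul_assoc _ (_ ^ _), mul_comm ((1 + (d : ℝ)) ^ _), add_comm (1 : ℝ),
    rpow_one_sub_mul_rpow_eq_div (by positivity) (by positivity), ← mul_div_assoc,
    le_div_iff₀ hw0]
  push_cast at hS'
  nlinarith

/-- **Binary Partition Lemma.** For a finite set `V ⊂ ℕ^d` with
`8(d+1)·c ≤ (|V|/(d+1))^{1/d}`, there is a dimension `i` and an integer `x` such that the
`c`-divider `π(i,x)` leaves at least `|V|/(4(d+1))` points on each side, and the boundary
part has at most `2c·(1+d)^{1/d}·|V|^{1-1/d}` points. -/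
theorem binary_partition_lemma (d c : ℕ) (hd : 2 ≤ d) (hc : 1 ≤ c)
    (V : Finset (Fin d → ℕ))
    (hbig : 8 * ((d : ℝ) + 1) * (c : ℝ) ≤ ((V.card : ℝ) / ((d : ℝ) + 1)) ^ ((1 : ℝ) / (d : ℝ))) :
    ∃ (i : Fin d) (x : ℤ),
      ((V.filter fun v => (v i : ℤ) ≤ x - 1).card : ℝ) ≥ (V.card : ℝ) / (4 * ((d : ℝ) + 1)) ∧
      ((V.filter fun v => x + (c : ℤ) ≤ (v i : ℤ)).card : ℝ) ≥
        (V.card : ℝ) / (4 * ((d : ℝ) + 1)) ∧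
      ((V.filter fun v => x ≤ (v i : ℤ) ∧ (v i : ℤ) ≤ x + (c : ℤ) - 1).card : ℝ) ≤
        2 * (c : ℝ) * (1 + (d : ℝ)) ^ ((1 : ℝ) / (d : ℝ)) *
          (V.card : ℝ) ^ (1 - (1 : ℝ) / (d : ℝ)) :=
  binary_partition_lemma_general d c hc V hbig
end

section
/- (Existence of a pseudo s-separator) For every integer d ≥ 2 there exists a constant K > 0 depending only on d with the following property. Let c ≥ 1 be an integer, s > 0 a real number, and V a finite set of points in ℕ^d with |V| > s and 8(d+1)·c ≤ (s/(d+1))^{1/d}. Then there exist a subset S ⊆ V and a partition of V ∖ S into nonempty parts V_1, …, V_h such that: (i) s/(4(d+1)) < |V_i| ≤ s for every i ∈ {1,…,h}; (ii) h ≤ 4(d+1)·|V|/s; (iii) for all i ≠ j and all u ∈ V_i, v ∈ V_j, ‖u − v‖_∞ > c; and (iv) |S| ≤ K·c·|V|·s^{−1/d}·(1 + log(|V|/s)). -/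
/-!
Tile `ℕ^d` by cubes of side `L = ⌊(s/(d+1))^{1/d}⌋` translated by a common offset `t < L`, and let
`S` be the points lying within `c` of the upper face of their cube in some coordinate; two points
outside `S` in different cubes are then more than `c` apart. Each point lies in `S` for at most
`d·c` of the `L` offsets, so some offset gives `|S| ≤ d·c·|V|/L = O(c·|V|·s^{-1/d})`, which is also
at most `|V|/4`. A cube holds at most `L^d ≤ s/(d+1)` points, so greedily merging whole cubes gives
groups of size in `(β, 2β + L^d] ⊆ (β, s]` for `β = s/(4(d+1))`, hence fewer than `|V|/β` groups.
-/

open Finset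

namespace PseudoSeparator

section Grouping

variable {κ : Type*} [DecidableEq κ]

lemma exists_subset_sum_mem_Ioc (w : κ → ℝ) {A β : ℝ} (hβ : 0 ≤ β) (I : Finset κ)
    (hw : ∀ i ∈ I, w i ≤ A) (hI : β < ∑ i ∈ I, w i) :
    ∃ J ⊆ I, β < ∑ i ∈ J, w i ∧ ∑ i ∈ J, w i ≤ β + A := by
  induction I using Finset.induction_on with
  | empty => simp only [sum_empty] at hI; linarith
  | insert a I ha ih =>
    rw [sum_insert ha] at hI
    by_cases hβI : β < ∑ i ∈ I, w i
    · obtain ⟨J, hJI, hJ⟩ := ih (fun i hi ↦ hw i (mem_insert_of_mem hi)) hβI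
      exact ⟨J, hJI.trans (subset_insert a I), hJ⟩
    · refine ⟨insert a I, Subset.rfl, ?_⟩
      rw [sum_insert ha]
      have := hw a (mem_insert_self a I)
      exact ⟨hI, by linarith⟩

lemma exists_finpartition_sum_mem_Ioc (w : κ → ℝ) {A β : ℝ} (hβ : 0 ≤ β) (I : Finset κ)
    (hw : ∀ i ∈ I, w i ≤ A) (hI : β < ∑ i ∈ I, w i) :
    ∃ P : Finpartition I, ∀ p ∈ P.parts, β < ∑ i ∈ p, w i ∧ ∑ i ∈ p, w i ≤ 2 * β + A := by
  induction I using Finset.strongInduction with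
  | H I ih =>
  obtain ⟨J, hJI, hβJ, hJA⟩ := exists_subset_sum_mem_Ioc w hβ I hw hI
  have hJ : J.Nonempty := nonempty_of_sum_ne_zero (f := w) (by linarith)
  have hsplit := sum_sdiff hJI (f := w)
  by_cases hrest : β < ∑ i ∈ I \ J, w i
  · obtain ⟨P, hP⟩ := ih (I \ J) (sdiff_ssubset hJI hJ) (fun i hi ↦ hw i (sdiff_subset hi)) hrest
    refine ⟨P.extend hJ.ne_empty sdiff_disjoint (sdiff_union_of_subset hJI), ?_⟩
    simp only [Finpartition.extend_parts, forall_mem_insert]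
    exact ⟨⟨hβJ, by linarith⟩, hP⟩
  · refine ⟨Finpartition.indiscrete (hJ.mono hJI).ne_empty, ?_⟩
    simp only [Finpartition.indiscrete_parts, mem_singleton, forall_eq]
    constructor <;> linarith

variable {α : Type*} [DecidableEq α]

lemma exists_grouping_of_card_fiber_le (W : Finset α) (f : α → κ) {A β : ℝ} (hβ : 0 ≤ β)
    (hA : ∀ z, (#{u ∈ W | f u = z} : ℝ) ≤ A) (hW : β < #W) :
    ∃ (h : ℕ) (Vp : Fin h → Finset α), univ.biUnion Vp = W ∧
      (∀ i j, i ≠ j → ∀ u ∈ Vp i, ∀ v ∈ Vp j, f u ≠ f v) ∧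
      ∀ i, β < #(Vp i) ∧ (#(Vp i) : ℝ) ≤ 2 * β + A := by
  have hcard : ∀ p : Finset κ, (#{u ∈ W | f u ∈ p} : ℝ) = ∑ z ∈ p, (#{u ∈ W | f u = z} : ℝ) :=
    fun p ↦ mod_cast (sum_card_fiberwise_eq_card_filter W p f).symm
  obtain ⟨P, hP⟩ := exists_finpartition_sum_mem_Ioc (fun z ↦ (#{u ∈ W | f u = z} : ℝ)) hβ
    (W.image f) (fun z _ ↦ hA z) (by rwa [← hcard, filter_true_of_mem fun u ↦ mem_image_of_mem f])
  let e := P.parts.equivFin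
  refine ⟨#P.parts, fun i ↦ {u ∈ W | f u ∈ (e.symm i : Finset κ)}, ?_, ?_, fun i ↦ ?_⟩
  · ext u
    simp only [mem_biUnion, mem_univ, mem_filter, true_and]
    refine ⟨fun ⟨_, hu, _⟩ ↦ hu, fun hu ↦ ?_⟩
    obtain ⟨p, hp, hup⟩ := P.exists_mem (mem_image_of_mem f hu)
    exact ⟨e ⟨p, hp⟩, hu, by simpa using hup⟩
  · intro i j hij u hu v hv huv
    have hne : (e.symm i : Finset κ) ≠ e.symm j := fun h ↦ hij (e.symm.injective (Subtype.ext h))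
    exact disjoint_left.1 (P.disjoint (e.symm i).2 (e.symm j).2 hne) (mem_filter.1 hu).2
      (huv ▸ (mem_filter.1 hv).2)
  · rw [hcard]
    exact hP _ (e.symm i).2

lemma card_mul_le_card_biUnion {ι : Type*} (s : Finset ι) (Vp : ι → Finset α)
    (hVp : (s : Set ι).PairwiseDisjoint Vp) {β : ℝ} (hβ : ∀ i ∈ s, β ≤ #(Vp i)) :
    #s * β ≤ #(s.biUnion Vp) := by
  rw [card_biUnion hVp, Nat.cast_sum, ← nsmul_eq_mul]
  exact card_nsmul_le_sum s _ β hβ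

end Grouping

section Grid

variable {ι : Type*} [Fintype ι]

def cell (L t : ℕ) (u : ι → ℕ) : ι → ℕ := fun k ↦ (u k + t) / L

def boundaryLayer (L c t : ℕ) (V : Finset (ι → ℕ)) : Finset (ι → ℕ) :=
  {u ∈ V | ∃ k, L - c ≤ (u k + t) % L}

lemma boundaryLayer_subset (L c t : ℕ) (V : Finset (ι → ℕ)) : boundaryLayer L c t V ⊆ V :=
  filter_subset _ _

lemma card_filter_cell_eq_le {L : ℕ} (hL : 0 < L) (t : ℕ) (W : Finset (ι → ℕ)) (z : ι → ℕ) :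
    #{u ∈ W | cell L t u = z} ≤ L ^ Fintype.card ι := by
  classical
  have hinj : Set.InjOn (fun (u : ι → ℕ) k ↦ (u k + t) % L)
      ({u ∈ W | cell L t u = z} : Finset _) := by
    intro u hu v hv huv
    simp only [mem_coe, mem_filter] at hu hv
    funext k
    have hdiv : (u k + t) / L = (v k + t) / L := (congrFun hu.2 k).trans (congrFun hv.2 k).symm
    have hmod : (u k + t) % L = (v k + t) % L := congrFun huv k
    have := Nat.div_add_mod (u k + t) L
    rw [hdiv, hmod, Nat.div_add_mod] at this
    omega
  calc #{u ∈ W | cell L t u = z}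
      ≤ #(Fintype.piFinset fun _ : ι ↦ range L) :=
        card_le_card_of_injOn _ (fun u _ ↦ Fintype.mem_piFinset.2 fun k ↦ mem_range.2
          (Nat.mod_lt _ hL)) hinj
    _ = L ^ Fintype.card ι := by simp

lemma lt_abs_sub_of_div_ne {L c t a b : ℕ} (ha : (a + t) % L < L - c) (hb : (b + t) % L < L - c)
    (hab : (a + t) / L ≠ (b + t) / L) : (c : ℤ) < |(a : ℤ) - b| := by
  wlog hlt : (a + t) / L < (b + t) / L generalizing a b
  · rw [abs_sub_comm]
    exact this hb ha hab.symm (lt_of_le_of_ne (not_lt.1 hlt) hab.symm)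
  have := Nat.div_add_mod (a + t) L
  have := Nat.div_add_mod (b + t) L
  have : L * ((a + t) / L) + L ≤ L * ((b + t) / L) := by nlinarith
  exact lt_abs.2 (Or.inr (by omega))

lemma card_range_filter_sub_le_add_mod (L c a : ℕ) (hL : 0 < L) :
    #{t ∈ range L | L - c ≤ (a + t) % L} ≤ c := by
  have hinj : Set.InjOn (fun t ↦ (a + t) % L)
      ({t ∈ range L | L - c ≤ (a + t) % L} : Finset ℕ) := by
    intro t₁ h₁ t₂ h₂ heq
    simp only [mem_coe, mem_filter, mem_range] at h₁ h₂
    have := Nat.ModEq.add_left_cancel' a heq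
    rwa [Nat.ModEq, Nat.mod_eq_of_lt h₁.1, Nat.mod_eq_of_lt h₂.1] at this
  calc #{t ∈ range L | L - c ≤ (a + t) % L}
      ≤ #(Ico (L - c) L) := card_le_card_of_injOn _
        (fun t ht ↦ mem_Ico.2 ⟨(mem_filter.1 ht).2, Nat.mod_lt _ hL⟩) hinj
    _ ≤ c := by rw [Nat.card_Ico]; omega

lemma exists_shift_card_boundaryLayer_le {L : ℕ} (hL : 0 < L) (c : ℕ) (V : Finset (ι → ℕ)) :
    ∃ t, L * #(boundaryLayer L c t V) ≤ Fintype.card ι * c * #V := by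
  have hpoint : ∀ u : ι → ℕ,
      #{t ∈ range L | ∃ k, L - c ≤ (u k + t) % L} ≤ Fintype.card ι * c := by
    intro u
    calc #{t ∈ range L | ∃ k, L - c ≤ (u k + t) % L}
        ≤ #(univ.biUnion fun k ↦ {t ∈ range L | L - c ≤ (u k + t) % L}) :=
          card_le_card fun t ↦ by simp only [mem_filter, mem_biUnion, mem_univ, true_and]; tauto
      _ ≤ ∑ k, #{t ∈ range L | L - c ≤ (u k + t) % L} := card_biUnion_le
      _ ≤ ∑ _k : ι, c := sum_le_sum fun k _ ↦ card_range_filter_sub_le_add_mod L c (u k) hL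
      _ = Fintype.card ι * c := by simp
  have htotal : ∑ t ∈ range L, #(boundaryLayer L c t V) ≤ Fintype.card ι * c * #V :=
    calc ∑ t ∈ range L, #(boundaryLayer L c t V)
        = ∑ u ∈ V, #{t ∈ range L | ∃ k, L - c ≤ (u k + t) % L} :=
          (sum_card_bipartiteAbove_eq_sum_card_bipartiteBelow _).symm
      _ ≤ ∑ _u ∈ V, Fintype.card ι * c := sum_le_sum fun u _ ↦ hpoint u
      _ = Fintype.card ι * c * #V := by rw [sum_const, smul_eq_mul, mul_comm]
  obtain ⟨t, -, ht⟩ := exists_le_of_sum_le (nonempty_range_iff.2 hL.ne')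
    (f := fun t ↦ L * #(boundaryLayer L c t V)) (g := fun _ ↦ Fintype.card ι * c * #V)
    (by rw [← mul_sum, sum_const, card_range, smul_eq_mul]; exact Nat.mul_le_mul_left L htotal)
  exact ⟨t, ht⟩

lemma exists_grid_separator (V : Finset (ι → ℕ)) {c L : ℕ} (hcL : 4 * Fintype.card ι * c < L)
    {β : ℝ} (hβ : 0 ≤ β) (hβV : 4 * β < 3 * #V) :
    ∃ S ⊆ V, L * #S ≤ Fintype.card ι * c * #V ∧
      ∃ (h : ℕ) (Vp : Fin h → Finset (ι → ℕ)),
        (∀ i j, i ≠ j → Disjoint (Vp i) (Vp j)) ∧ univ.biUnion Vp = V \ S ∧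
        (∀ i, β < #(Vp i) ∧ (#(Vp i) : ℝ) ≤ 2 * β + L ^ Fintype.card ι) ∧ h * β ≤ #V ∧
        ∀ i j, i ≠ j → ∀ u ∈ Vp i, ∀ v ∈ Vp j, ∃ k, (c : ℤ) < |(u k : ℤ) - v k| := by
  have hL : 0 < L := by omega
  obtain ⟨t, ht⟩ := exists_shift_card_boundaryLayer_le hL c V
  set S := boundaryLayer L c t V
  have hSV : S ⊆ V := boundaryLayer_subset L c t V
  have hS : 4 * #S ≤ #V :=
    Nat.le_of_mul_le_mul_left (by nlinarith [Nat.mul_le_mul_right #V hcL.le]) hL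
  have hW : β < #(V \ S) := by
    rw [card_sdiff_of_subset hSV, Nat.cast_sub (card_le_card hSV)]
    linarith [(show (4 * #S : ℝ) ≤ #V by exact_mod_cast hS)]
  obtain ⟨h, Vp, hunion, hcell, hsize⟩ := exists_grouping_of_card_fiber_le _ (cell L t)
    (A := (L : ℝ) ^ Fintype.card ι) hβ (fun z ↦ mod_cast card_filter_cell_eq_le hL t _ z) hW
  have hdisj : ∀ i j, i ≠ j → Disjoint (Vp i) (Vp j) := fun i j hij ↦
    disjoint_left.2 fun u hi hj ↦ hcell i j hij u hi u hj rfl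
  have hcount : h * β ≤ #V := by
    simpa [hunion] using (card_mul_le_card_biUnion univ Vp (fun i _ j _ hij ↦ hdisj i j hij)
      fun i _ ↦ (hsize i).1.le).trans (mod_cast card_le_card (hunion ▸ sdiff_subset))
  have hinterior : ∀ i, ∀ u ∈ Vp i, ∀ k, (u k + t) % L < L - c := by
    intro i u hu k
    have hu : u ∈ V \ S := hunion ▸ mem_biUnion.2 ⟨i, mem_univ i, hu⟩
    simp only [S, boundaryLayer, mem_sdiff, mem_filter, not_and, not_exists, not_le] at hu
    exact hu.2 hu.1 k
  refine ⟨S, hSV, ht, h, Vp, hdisj, hunion, hsize, hcount, fun i j hij u hu v hv ↦ ?_⟩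
  obtain ⟨k, hk⟩ := Function.ne_iff.1 (hcell i j hij u hu v hv)
  exact ⟨k, lt_abs_sub_of_div_ne (hinterior i u hu k) (hinterior j v hv k) hk⟩

end Grid

lemma exists_cell_side {d c : ℕ} {s : ℝ} (hd : d ≠ 0) (hs : 0 < s) (hc : 1 ≤ c)
    (hP : 8 * ((d : ℝ) + 1) * c ≤ (s / ((d : ℝ) + 1)) ^ ((1 : ℝ) / d)) :
    ∃ L : ℕ, 4 * d * c < L ∧ (L : ℝ) ^ d ≤ s / ((d : ℝ) + 1) ∧
      s ^ ((1 : ℝ) / d) ≤ 2 * ((d : ℝ) + 1) * L := by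
  set P := (s / ((d : ℝ) + 1)) ^ ((1 : ℝ) / d)
  have hc' : (1 : ℝ) ≤ c := mod_cast hc
  have hd1 : (1 : ℝ) ≤ d := mod_cast Nat.one_le_iff_ne_zero.2 hd
  have hP0 : 0 ≤ s / ((d : ℝ) + 1) := by positivity
  have hPL : P ≤ 2 * ⌊P⌋₊ := by
    have := Nat.lt_floor_add_one P
    nlinarith
  refine ⟨⌊P⌋₊, ?_, ?_, ?_⟩
  · exact_mod_cast (show (4 * d * c : ℝ) < ⌊P⌋₊ by linarith)
  · calc (⌊P⌋₊ : ℝ) ^ d ≤ P ^ d := by gcongr; exact Nat.floor_le (by positivity)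
      _ = s / ((d : ℝ) + 1) := by
        rw [← Real.rpow_natCast, ← Real.rpow_mul hP0, one_div_mul_cancel (by positivity),
          Real.rpow_one]
  · calc s ^ ((1 : ℝ) / d) = ((d : ℝ) + 1) ^ ((1 : ℝ) / d) * P := by
          rw [← Real.mul_rpow (by positivity) hP0, mul_div_cancel₀ _ (by positivity)]
      _ ≤ ((d : ℝ) + 1) * P := by
          gcongr
          exact Real.rpow_le_self_of_one_le (by linarith) (div_le_one_of_le₀ hd1 (by positivity))
      _ ≤ 2 * ((d : ℝ) + 1) * ⌊P⌋₊ := by nlinarith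

end PseudoSeparator

open PseudoSeparator in
theorem pseudo_s_separator_exists_general (d : ℕ) :
    ∃ K : ℝ, 0 < K ∧
      ∀ (c : ℕ) (s : ℝ) (V : Finset (Fin d → ℕ)),
        1 ≤ c → 0 < s → s < (V.card : ℝ) →
        8 * ((d : ℝ) + 1) * (c : ℝ) ≤ (s / ((d : ℝ) + 1)) ^ ((1 : ℝ) / (d : ℝ)) →
        ∃ (S : Finset (Fin d → ℕ)) (h : ℕ) (Vp : Fin h → Finset (Fin d → ℕ)),
          S ⊆ V ∧
          (∀ i j : Fin h, i ≠ j → Disjoint (Vp i) (Vp j)) ∧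
          (Finset.univ.biUnion Vp = V \ S) ∧
          (∀ i : Fin h,
            s / (4 * ((d : ℝ) + 1)) < ((Vp i).card : ℝ) ∧ ((Vp i).card : ℝ) ≤ s) ∧
          ((h : ℝ) ≤ 4 * ((d : ℝ) + 1) * (V.card : ℝ) / s) ∧
          (∀ i j : Fin h, i ≠ j → ∀ u ∈ Vp i, ∀ v ∈ Vp j,
            ∃ k : Fin d, (c : ℤ) < |(u k : ℤ) - (v k : ℤ)|) ∧
          ((S.card : ℝ) ≤ K * (c : ℝ) * (V.card : ℝ) * s ^ (-(1 : ℝ) / (d : ℝ)) *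
            (1 + Real.log ((V.card : ℝ) / s))) := by
  refine ⟨2 * ((d : ℝ) + 1) ^ 2, by positivity, fun c s V hc hs hsV hP ↦ ?_⟩
  have hc' : (1 : ℝ) ≤ c := mod_cast hc
  have hd : d ≠ 0 := by
    rintro rfl
    norm_num at hP
    linarith
  obtain ⟨L, hcL, hLd, hsL⟩ := exists_cell_side hd hs hc hP
  have hsd : s / ((d : ℝ) + 1) ≤ s / 2 := div_le_div_of_nonneg_left hs.le (by norm_num)
    (by exact_mod_cast Nat.succ_le_succ (Nat.one_le_iff_ne_zero.2 hd))
  set β := s / (4 * ((d : ℝ) + 1))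
  have hβ : β = s / ((d : ℝ) + 1) / 4 := by rw [div_div, mul_comm]
  have hβ0 : 0 < β := by positivity
  obtain ⟨S, hSV, hLS, h, Vp, hdisj, hunion, hsize, hcount, hsep⟩ :=
    exists_grid_separator V (by simpa using hcL) hβ0.le (by linarith)
  simp only [Fintype.card_fin] at hLS hsize
  refine ⟨S, h, Vp, hSV, hdisj, hunion, fun i ↦ ⟨(hsize i).1, by linarith [(hsize i).2]⟩, ?_,
    hsep, ?_⟩
  · calc (h : ℝ) ≤ #V / β := (le_div_iff₀ hβ0).2 hcount
      _ = 4 * ((d : ℝ) + 1) * #V / s := by rw [div_div_eq_mul_div]; ring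
  · have hLS' : (L : ℝ) * #S ≤ d * c * #V := mod_cast hLS
    have hlog : 0 ≤ Real.log (#V / s) := Real.log_nonneg ((one_le_div hs).2 hsV.le)
    rw [neg_div, Real.rpow_neg hs.le]
    calc (#S : ℝ) ≤ 2 * ((d : ℝ) + 1) ^ 2 * c * #V * (s ^ ((1 : ℝ) / d))⁻¹ := by
          rw [← div_eq_mul_inv, le_div_iff₀ (by positivity)]
          nlinarith [mul_le_mul_of_nonneg_left hsL (Nat.cast_nonneg (α := ℝ) #S)]
      _ ≤ _ := le_mul_of_one_le_right (by positivity) (by linarith)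

/-- **Existence of a pseudo s-separator.** For every `d ≥ 2` there is a
constant `K > 0` depending only on `d` such that: for every integer `c ≥ 1`, real `s > 0`
and finite `V ⊂ ℕ^d` with `|V| > s` and `8(d+1)·c ≤ (s/(d+1))^{1/d}`, there exist `S ⊆ V`
and a partition of `V \ S` into parts `V_1, …, V_h` with
(i) `s/(4(d+1)) < |V_i| ≤ s`, (ii) `h ≤ 4(d+1)·|V|/s`,
(iii) points in distinct parts are at `ℓ∞`-distance `> c`, and
(iv) `|S| ≤ K·c·|V|·s^{-1/d}·(1 + log(|V|/s))`. -/
theorem pseudo_s_separator_exists (d : ℕ) (hd : 2 ≤ d) :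
    ∃ K : ℝ, 0 < K ∧
      ∀ (c : ℕ) (s : ℝ) (V : Finset (Fin d → ℕ)),
        1 ≤ c → 0 < s → s < (V.card : ℝ) →
        8 * ((d : ℝ) + 1) * (c : ℝ) ≤ (s / ((d : ℝ) + 1)) ^ ((1 : ℝ) / (d : ℝ)) →
        ∃ (S : Finset (Fin d → ℕ)) (h : ℕ) (Vp : Fin h → Finset (Fin d → ℕ)),
          S ⊆ V ∧
          (∀ i j : Fin h, i ≠ j → Disjoint (Vp i) (Vp j)) ∧
          (Finset.univ.biUnion Vp = V \ S) ∧
          (∀ i : Fin h,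
            s / (4 * ((d : ℝ) + 1)) < ((Vp i).card : ℝ) ∧ ((Vp i).card : ℝ) ≤ s) ∧
          ((h : ℝ) ≤ 4 * ((d : ℝ) + 1) * (V.card : ℝ) / s) ∧
          (∀ i j : Fin h, i ≠ j → ∀ u ∈ Vp i, ∀ v ∈ Vp j,
            ∃ k : Fin d, (c : ℤ) < |(u k : ℤ) - (v k : ℤ)|) ∧
          ((S.card : ℝ) ≤ K * (c : ℝ) * (V.card : ℝ) * s ^ (-(1 : ℝ) / (d : ℝ)) *
            (1 + Real.log ((V.card : ℝ) / s))) :=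
  pseudo_s_separator_exists_general d
end

section
/- Let d ≥ 2 and c ≥ 1 be integers, let V be a finite set of points in ℕ^d with 8(d+1)·c ≤ (|V|/(d+1))^{1/d}, let r > 0 be a real number, and let Ṽ ⊆ V be a nonempty (1/r)-approximation of V with respect to axis-parallel boxes. Then there exist a dimension i ∈ {1,…,d} and an integer x such that: |{ṽ ∈ Ṽ : ṽ_i ≤ x − 1}| ≥ |Ṽ|·(1/(4(d+1)) − 1/r), |{ṽ ∈ Ṽ : ṽ_i ≥ x + c}| ≥ |Ṽ|·(1/(4(d+1)) − 1/r), and |{ṽ ∈ Ṽ : x ≤ ṽ_i ≤ x + c − 1}| ≤ 2c·(1+d)^{1/d}·|Ṽ|·(|V|^{−1/d} + 1/r). -/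
/-!
Cut each axis `i` at the lower and upper `1/(4(d+1))`-quantiles `lᵢ`, `uᵢ` of `V`. Fewer than
`2d · |V|/(4(d+1))` points of `V` lie outside the box `∏ [lᵢ, uᵢ]`, so it holds more than
`|V|/(d+1) = k^d` points, where `k = (|V|/(d+1))^{1/d}`, and is wider than `5k/8` in some coordinate
`i`. As `d ≥ 2` gives `k ≥ 24c`, that window contains `⌈k/(2c)⌉` disjoint slabs of width `c`, so by
pigeonhole one of them holds at most `2c|V|/k` points; each side of it contains a quantile tail.
Half-spaces and slabs agree with boxes on finite sets, so the approximation property carries the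
three counts from `V` over to `W`.
-/

/-- `X'` is an `ε`-approximation of the finite point set `X ⊂ ℕ^d` with respect to
axis-parallel boxes: for every axis-parallel box (given by integer lower and upper bounds
per coordinate, which suffices for sets of integer points), the relative counts of `X'`
and `X` inside the box differ by at most `ε`. -/
def IsBoxApprox (d : ℕ) (X X' : Finset (Fin d → ℕ)) (ε : ℝ) : Prop :=
  ∀ lo hi : Fin d → ℤ,
    |((X'.filter fun v => ∀ j : Fin d, lo j ≤ (v j : ℤ) ∧ (v j : ℤ) ≤ hi j).card : ℝ) /
        (X'.card : ℝ) -
      ((X.filter fun v => ∀ j : Fin d, lo j ≤ (v j : ℤ) ∧ (v j : ℤ) ≤ hi j).card : ℝ) /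
        (X.card : ℝ)| ≤ ε

open Finset

section OneCoordinate

variable {α : Type*} (s : Finset α) (f : α → ℤ) {q : ℝ}

theorem exists_lower_quantile (hq : 0 < q) (hqs : q ≤ #s) :
    ∃ l : ℤ, q ≤ #{x ∈ s | f x ≤ l} ∧ (#{x ∈ s | f x < l} : ℝ) < q := by
  obtain ⟨b, hb⟩ := (s.image f).bddBelow
  obtain ⟨B, hB⟩ := (s.image f).bddAbove
  have hbounded : ∀ z, q ≤ #{x ∈ s | f x ≤ z} → b ≤ z := by
    intro z hz
    by_contra! hzb
    have hempty : {x ∈ s | f x ≤ z} = ∅ :=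
      filter_eq_empty_iff.2 fun x hx hxz => by
        linarith [hb (mem_coe.2 (mem_image_of_mem f hx))]
    rw [hempty, card_empty, Nat.cast_zero] at hz
    linarith
  have hB_mem : q ≤ #{x ∈ s | f x ≤ B} := by
    rwa [filter_true_of_mem fun x hx => hB (mem_coe.2 (mem_image_of_mem f hx))]
  obtain ⟨l, hl, hleast⟩ := Int.exists_least_of_bdd ⟨b, hbounded⟩ ⟨B, hB_mem⟩
  refine ⟨l, hl, lt_of_not_ge fun h => ?_⟩
  have hpred : q ≤ #{x ∈ s | f x ≤ l - 1} := by
    simpa only [Int.le_sub_one_iff] using h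
  linarith [hleast _ hpred]

theorem exists_upper_quantile (hq : 0 < q) (hqs : q ≤ #s) :
    ∃ u : ℤ, q ≤ #{x ∈ s | u ≤ f x} ∧ (#{x ∈ s | u < f x} : ℝ) < q := by
  obtain ⟨l, hl, hl'⟩ := exists_lower_quantile s (fun x => -f x) hq hqs
  exact ⟨-l, by simpa only [neg_le] using hl, by simpa only [neg_lt] using hl'⟩

theorem exists_card_filter_slab_le (a : ℤ) (c : ℕ) {m : ℕ} (hm : 0 < m) {T : ℝ}
    (hT : #s ≤ m * T) :
    ∃ j < m, (#{x ∈ s | a + j * c ≤ f x ∧ f x ≤ a + j * c + c - 1} : ℝ) ≤ T := by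
  classical
  set slab : ℕ → Finset α := fun j => {x ∈ s | a + j * c ≤ f x ∧ f x ≤ a + j * c + c - 1}
  have hdisj : ((range m : Finset ℕ) : Set ℕ).PairwiseDisjoint slab := by
    intro j _ j' _ hne
    refine disjoint_filter.2 fun x _ h h' => ?_
    rcases hne.lt_or_gt with hlt | hlt
    · have : ((j : ℤ) + 1) * c ≤ j' * c := by gcongr; exact_mod_cast hlt
      linarith [h'.1, h.2]
    · have : ((j' : ℤ) + 1) * c ≤ j * c := by gcongr; exact_mod_cast hlt
      linarith [h.1, h'.2]
  have hsum : ∑ j ∈ range m, (#(slab j) : ℝ) ≤ ∑ _j ∈ range m, T := by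
    calc ∑ j ∈ range m, (#(slab j) : ℝ) = #((range m).biUnion slab) := by
          rw [card_biUnion hdisj, Nat.cast_sum]
      _ ≤ #s := by exact_mod_cast card_le_card (biUnion_subset.2 fun j _ => filter_subset _ _)
      _ ≤ ∑ _j ∈ range m, T := by simpa using hT
  obtain ⟨j, hj, hle⟩ := exists_le_of_sum_le (nonempty_range_iff.2 hm.ne') hsum
  exact ⟨j, mem_range.1 hj, hle⟩

theorem exists_light_slab_of_lt_width {l u : ℤ} {c : ℕ} {k : ℝ} (hc : 1 ≤ c)
    (hck : 24 * (c : ℝ) ≤ k) (hwide : 5 / 8 * k < (u + 1 - l : ℤ)) :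
    ∃ x : ℤ, l + 1 ≤ x ∧ x + c ≤ u ∧
      (#{y ∈ s | x ≤ f y ∧ f y ≤ x + c - 1} : ℝ) ≤ 2 * c * #s / k := by
  have hcR : (1 : ℝ) ≤ c := by exact_mod_cast hc
  have hk0 : 0 < k := by linarith
  set m : ℕ := ⌈k / (2 * c)⌉₊
  have hm : (m : ℝ) < k / (2 * c) + 1 := Nat.ceil_lt_add_one (by positivity)
  have hmT : (#s : ℝ) ≤ m * (2 * c * #s / k) := by
    calc (#s : ℝ) = k / (2 * c) * (2 * c * #s / k) := by field_simp
      _ ≤ m * (2 * c * #s / k) := by gcongr; exact Nat.le_ceil _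
  obtain ⟨j, hj, hslab⟩ := exists_card_filter_slab_le s f (l + 1) c (m := m)
    (Nat.ceil_pos.2 (by positivity)) hmT
  refine ⟨l + 1 + j * c, by linarith [(by positivity : (0 : ℤ) ≤ j * c)], ?_, hslab⟩
  have hjm : ((j : ℝ) + 1) * c ≤ m * c := by
    gcongr
    exact_mod_cast hj
  have hmc : (m : ℝ) * c < k / 2 + c := by
    calc (m : ℝ) * c < (k / (2 * c) + 1) * c := by gcongr
      _ = k / 2 + c := by field_simp
  have : ((l + 1 + j * c + c : ℤ) : ℝ) < u := by push_cast at hwide ⊢; linarith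
  exact_mod_cast this.le

end OneCoordinate

theorem Set.OrdConnected.exists_Icc_iff_mem {s : Set ℤ} (hs : s.OrdConnected) (T : Finset ℤ) :
    ∃ a b : ℤ, ∀ t ∈ T, (a ≤ t ∧ t ≤ b) ↔ t ∈ s := by
  classical
  rcases (T.filter (· ∈ s)).eq_empty_or_nonempty with hempty | hne
  · refine ⟨1, 0, fun t ht => ⟨fun h => by omega, fun hts => ?_⟩⟩
    simpa [hempty] using mem_filter.2 ⟨ht, hts⟩
  · refine ⟨_, _, fun t ht => ⟨fun h => hs.out (mem_filter.1 (min'_mem _ hne)).2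
      (mem_filter.1 (max'_mem _ hne)).2 h, fun hts => ?_⟩⟩
    exact ⟨min'_le _ _ (mem_filter.2 ⟨ht, hts⟩), le_max' _ _ (mem_filter.2 ⟨ht, hts⟩)⟩

section Boxes

variable {d : ℕ}

theorem exists_box_iff_coord_mem (Y : Finset (Fin d → ℕ)) (i : Fin d) {s : Set ℤ}
    (hs : s.OrdConnected) :
    ∃ lo hi : Fin d → ℤ, ∀ v ∈ Y, (∀ j, lo j ≤ v j ∧ (v j : ℤ) ≤ hi j) ↔ (v i : ℤ) ∈ s := by
  obtain ⟨a, b, hab⟩ := hs.exists_Icc_iff_mem (Y.image fun v => (v i : ℤ))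
  obtain ⟨M, hM⟩ : ∃ M : ℕ, ∀ v ∈ Y, ∀ j, v j ≤ M :=
    ⟨Y.sup fun v => univ.sup v, fun v hv j =>
      (le_sup (mem_univ j)).trans (le_sup (f := fun v => univ.sup v) hv)⟩
  refine ⟨Function.update 0 i a, Function.update (fun _ => (M : ℤ)) i b, fun v hv => ?_⟩
  rw [← hab _ (mem_image_of_mem _ hv)]
  refine ⟨fun h => by simpa using h i, fun h j => ?_⟩
  rcases eq_or_ne j i with rfl | hj
  · simpa using h
  · simp [Function.update_of_ne hj, hM v hv j]

theorem card_filter_mem_box_le (V : Finset (Fin d → ℕ)) (l u : Fin d → ℤ) :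
    #{v ∈ V | ∀ i, l i ≤ v i ∧ (v i : ℤ) ≤ u i} ≤ ∏ i, (u i + 1 - l i).toNat := by
  calc #{v ∈ V | ∀ i, l i ≤ v i ∧ (v i : ℤ) ≤ u i} ≤ #(Icc l u) := by
        refine card_le_card_of_injOn (fun v i => (v i : ℤ)) (fun v hv => ?_)
          fun v _ w _ h => funext fun i => by simpa using congr_fun h i
        have hv := (mem_filter.1 (mem_coe.1 hv)).2
        exact mem_coe.2 (mem_Icc.2 ⟨fun i => (hv i).1, fun i => (hv i).2⟩)
    _ = ∏ i, (u i + 1 - l i).toNat := by simp only [Pi.card_Icc, Int.card_Icc]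

theorem card_le_card_filter_mem_box_add_sum (V : Finset (Fin d → ℕ)) (l u : Fin d → ℤ) :
    #V ≤ #{v ∈ V | ∀ i, l i ≤ v i ∧ (v i : ℤ) ≤ u i} +
      ∑ i, (#{v ∈ V | (v i : ℤ) < l i} + #{v ∈ V | u i < v i}) := by
  rw [← card_filter_add_card_filter_not (fun v : Fin d → ℕ => ∀ i, l i ≤ v i ∧ (v i : ℤ) ≤ u i)]
  gcongr
  calc #{v ∈ V | ¬∀ i, l i ≤ v i ∧ (v i : ℤ) ≤ u i}
      ≤ #(univ.biUnion fun i => {v ∈ V | (v i : ℤ) < l i} ∪ {v ∈ V | u i < v i}) := by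
        refine card_le_card fun v hv => ?_
        obtain ⟨hvV, hout⟩ := mem_filter.1 hv
        obtain ⟨i, hi⟩ := not_forall.1 hout
        refine mem_biUnion.2 ⟨i, mem_univ i, ?_⟩
        rcases lt_or_ge (v i : ℤ) (l i) with h | h
        · exact mem_union_left _ (mem_filter.2 ⟨hvV, h⟩)
        · exact mem_union_right _ (mem_filter.2 ⟨hvV, lt_of_not_ge fun h' => hi ⟨h, h'⟩⟩)
    _ ≤ _ := card_biUnion_le.trans (sum_le_sum fun i _ => card_union_le _ _)

theorem exists_lt_width_of_card (V : Finset (Fin d → ℕ)) {l u : Fin d → ℤ} {q w : ℝ}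
    (hw : 0 ≤ w) (hl : ∀ i, (#{v ∈ V | (v i : ℤ) < l i} : ℝ) ≤ q)
    (hu : ∀ i, (#{v ∈ V | u i < v i} : ℝ) ≤ q) (hV : w ^ d + 2 * d * q < #V) :
    ∃ i, w < (u i + 1 - l i : ℤ) := by
  by_contra! hnarrow
  have hbox : (#{v ∈ V | ∀ i, l i ≤ v i ∧ (v i : ℤ) ≤ u i} : ℝ) ≤ w ^ d := by
    calc (#{v ∈ V | ∀ i, l i ≤ v i ∧ (v i : ℤ) ≤ u i} : ℝ)
        ≤ ∏ i, (((u i + 1 - l i).toNat : ℤ) : ℝ) := by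
          exact_mod_cast card_filter_mem_box_le V l u
      _ ≤ ∏ _i : Fin d, w := by
          refine prod_le_prod (fun _ _ => by positivity) fun i _ => ?_
          rw [Int.toNat_eq_max, Int.cast_max, Int.cast_zero]
          exact max_le (hnarrow i) hw
      _ = w ^ d := by rw [prod_const, card_univ, Fintype.card_fin]
  have hout : ∑ i, ((#{v ∈ V | (v i : ℤ) < l i} : ℝ) + #{v ∈ V | u i < v i}) ≤ 2 * d * q := by
    calc _ ≤ ∑ _i : Fin d, 2 * q := sum_le_sum fun i _ => by linarith [hl i, hu i]
      _ = 2 * d * q := by rw [sum_const, card_univ, Fintype.card_fin, nsmul_eq_mul]; ring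
  have hcard : (#V : ℝ) ≤ #{v ∈ V | ∀ i, l i ≤ v i ∧ (v i : ℤ) ≤ u i} +
      ∑ i, ((#{v ∈ V | (v i : ℤ) < l i} : ℝ) + #{v ∈ V | u i < v i}) := by
    exact_mod_cast card_le_card_filter_mem_box_add_sum V l u
  linarith

end Boxes

theorem mul_sub_le_of_abs_div_sub_le {a w b ε : ℝ} (ha : 0 ≤ a) (hw : 0 ≤ w)
    (h : |a / w - b| ≤ ε) : w * (b - ε) ≤ a := by
  rcases hw.eq_or_lt with rfl | hw
  · simpa using ha
  · have := (abs_le.1 h).1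
    rw [mul_comm, ← le_div_iff₀ hw]
    linarith

theorem le_mul_add_of_abs_div_sub_le {a w b ε : ℝ} (hw : 0 ≤ w) (haw : a ≤ w)
    (h : |a / w - b| ≤ ε) : a ≤ w * (b + ε) := by
  rcases hw.eq_or_lt with rfl | hw
  · simpa using haw
  · have := (abs_le.1 h).2
    rw [mul_comm, ← div_le_iff₀ hw]
    linarith

namespace IsBoxApprox

variable {d : ℕ} {X X' : Finset (Fin d → ℕ)} {ε : ℝ}

theorem abs_sub_le_of_ordConnected (h : IsBoxApprox d X X' ε) (i : Fin d) (p : ℤ → Prop)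
    [DecidablePred p] (hp : {t | p t}.OrdConnected) :
    |(#{v ∈ X' | p (v i)} : ℝ) / #X' - (#{v ∈ X | p (v i)} : ℝ) / #X| ≤ ε := by
  obtain ⟨lo, hi, hbox⟩ := exists_box_iff_coord_mem (X ∪ X') i hp
  have hX := filter_congr fun v hv => hbox v (mem_union_left X' hv)
  have hX' := filter_congr fun v hv => hbox v (mem_union_right X hv)
  have happrox := h lo hi
  rw [hX, hX'] at happrox
  exact happrox

theorem mul_sub_le_card_filter (h : IsBoxApprox d X X' ε) (i : Fin d) (p : ℤ → Prop)
    [DecidablePred p] (hp : {t | p t}.OrdConnected) :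
    (#X' : ℝ) * (#{v ∈ X | p (v i)} / #X - ε) ≤ #{v ∈ X' | p (v i)} :=
  mul_sub_le_of_abs_div_sub_le (Nat.cast_nonneg _) (Nat.cast_nonneg _)
    (h.abs_sub_le_of_ordConnected i p hp)

theorem card_filter_le_mul_add (h : IsBoxApprox d X X' ε) (i : Fin d) (p : ℤ → Prop)
    [DecidablePred p] (hp : {t | p t}.OrdConnected) :
    (#{v ∈ X' | p (v i)} : ℝ) ≤ #X' * (#{v ∈ X | p (v i)} / #X + ε) :=
  le_mul_add_of_abs_div_sub_le (Nat.cast_nonneg _)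
    (by exact_mod_cast card_filter_le _ _) (h.abs_sub_le_of_ordConnected i p hp)

end IsBoxApprox

theorem exists_balanced_light_slab {d : ℕ} (V : Finset (Fin d → ℕ)) {c : ℕ} {k : ℝ} (hd : d ≠ 0)
    (hc : 1 ≤ c) (hk : k ^ d = #V / ((d : ℝ) + 1)) (hck : 24 * (c : ℝ) ≤ k) :
    ∃ (i : Fin d) (x : ℤ),
      1 / (4 * ((d : ℝ) + 1)) ≤ #{v ∈ V | (v i : ℤ) ≤ x - 1} / #V ∧
      1 / (4 * ((d : ℝ) + 1)) ≤ #{v ∈ V | x + c ≤ (v i : ℤ)} / #V ∧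
      (#{v ∈ V | x ≤ (v i : ℤ) ∧ (v i : ℤ) ≤ x + c - 1} : ℝ) / #V ≤ 2 * c / k := by
  set n : ℝ := (#V : ℝ)
  set q : ℝ := n / (4 * (d + 1))
  have hk0 : 0 < k := by linarith [(by exact_mod_cast hc : (1 : ℝ) ≤ c)]
  have hn : 0 < n := by
    have : 0 < k ^ d := by positivity
    rw [hk] at this
    exact (div_pos_iff_of_pos_right (by positivity)).1 this
  have hq : 0 < q := by positivity
  have hqn : q ≤ n := div_le_self hn.le (by linarith [(Nat.cast_nonneg d : (0 : ℝ) ≤ d)])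
  choose l hl hl' using fun i : Fin d => exists_lower_quantile V (fun v => (v i : ℤ)) hq hqn
  choose u hu hu' using fun i : Fin d => exists_upper_quantile V (fun v => (v i : ℤ)) hq hqn
  have hsmall : (5 / 8 * k) ^ d + 2 * d * q < n := by
    have hpow : (5 / 8 * k) ^ d < k ^ d := pow_lt_pow_left₀ (by linarith) (by positivity) hd
    have hrest : k ^ d + 2 * d * q ≤ n := by
      simp only [hk, q]
      field_simp
      nlinarith [(Nat.cast_nonneg d : (0 : ℝ) ≤ d)]
    linarith
  obtain ⟨i, hwide⟩ := exists_lt_width_of_card V (by positivity) (fun i => (hl' i).le)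
    (fun i => (hu' i).le) hsmall
  obtain ⟨x, hlx, hxu, hslab⟩ := exists_light_slab_of_lt_width V (fun v => (v i : ℤ)) hc hck hwide
  refine ⟨i, x, ?_, ?_, ?_⟩
  · rw [le_div_iff₀ hn, one_div_mul_eq_div]
    calc q ≤ #{v ∈ V | (v i : ℤ) ≤ l i} := hl i
      _ ≤ _ := by gcongr; linarith
  · rw [le_div_iff₀ hn, one_div_mul_eq_div]
    calc q ≤ #{v ∈ V | u i ≤ (v i : ℤ)} := hu i
      _ ≤ _ := by gcongr
  · rw [div_le_iff₀ hn, div_mul_eq_mul_div]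
    exact hslab

theorem sample_divider_exists_general (d c : ℕ) (hd : 2 ≤ d) (hc : 1 ≤ c)
    (V : Finset (Fin d → ℕ))
    (hbig : 8 * ((d : ℝ) + 1) * (c : ℝ) ≤ ((V.card : ℝ) / ((d : ℝ) + 1)) ^ ((1 : ℝ) / (d : ℝ)))
    (r : ℝ) (hr : 0 < r)
    (W : Finset (Fin d → ℕ))
    (happrox : IsBoxApprox d V W (1 / r)) :
    ∃ (i : Fin d) (x : ℤ),
      ((W.filter fun v => (v i : ℤ) ≤ x - 1).card : ℝ) ≥
        (W.card : ℝ) * (1 / (4 * ((d : ℝ) + 1)) - 1 / r) ∧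
      ((W.filter fun v => x + (c : ℤ) ≤ (v i : ℤ)).card : ℝ) ≥
        (W.card : ℝ) * (1 / (4 * ((d : ℝ) + 1)) - 1 / r) ∧
      ((W.filter fun v => x ≤ (v i : ℤ) ∧ (v i : ℤ) ≤ x + (c : ℤ) - 1).card : ℝ) ≤
        2 * (c : ℝ) * (1 + (d : ℝ)) ^ ((1 : ℝ) / (d : ℝ)) * (W.card : ℝ) *
          ((V.card : ℝ) ^ (-(1 : ℝ) / (d : ℝ)) + 1 / r) := by
  have hdR : (2 : ℝ) ≤ d := by exact_mod_cast hd
  have hn : (0 : ℝ) ≤ #V := Nat.cast_nonneg _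
  set k := ((#V : ℝ) / ((d : ℝ) + 1)) ^ ((1 : ℝ) / (d : ℝ)) with hk_def
  have hk : k ^ d = #V / ((d : ℝ) + 1) := by
    rw [hk_def, one_div, Real.rpow_inv_natCast_pow (by positivity) (by omega)]
  obtain ⟨i, x, hleft, hright, hslab⟩ :=
    exists_balanced_light_slab V (by omega) hc hk (le_trans (by nlinarith) hbig)
  set A := 2 * c * (1 + (d : ℝ)) ^ ((1 : ℝ) / d) with hA_def
  have hk_inv : 2 * c / k = A * (#V : ℝ) ^ (-(1 : ℝ) / d) := by
    rw [hk_def, hA_def, Real.div_rpow hn (by positivity), neg_div, Real.rpow_neg hn,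
      add_comm (d : ℝ) 1]
    field_simp
  have hcR : (1 : ℝ) ≤ c := by exact_mod_cast hc
  have hA : 1 ≤ A :=
    one_le_mul_of_one_le_of_one_le (by linarith) (Real.one_le_rpow (by linarith) (by positivity))
  refine ⟨i, x, ?_, ?_, ?_⟩
  · exact le_trans (by gcongr) (happrox.mul_sub_le_card_filter i (· ≤ x - 1) Set.ordConnected_Iic)
  · exact le_trans (by gcongr) (happrox.mul_sub_le_card_filter i (x + c ≤ ·) Set.ordConnected_Ici)
  · calc _ ≤ (#W : ℝ) * (#{v ∈ V | x ≤ (v i : ℤ) ∧ (v i : ℤ) ≤ x + c - 1} / #V + 1 / r) :=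
          happrox.card_filter_le_mul_add i (fun t => x ≤ t ∧ t ≤ x + c - 1) Set.ordConnected_Icc
      _ ≤ #W * (2 * c / k + A * (1 / r)) := by
          gcongr
          exact le_mul_of_one_le_left (by positivity) hA
      _ = _ := by rw [hk_inv]; ring

/-- Given a `(1/r)`-approximation `Ṽ` of `V ⊂ ℕ^d`, there is a
`c`-divider `π(i,x)` whose sample-side left and right parts each contain at least
`|Ṽ|·(1/(4(d+1)) - 1/r)` samples and whose sample-side boundary part has at most
`2c·(1+d)^{1/d}·|Ṽ|·(|V|^{-1/d} + 1/r)` samples. -/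
theorem sample_divider_exists (d c : ℕ) (hd : 2 ≤ d) (hc : 1 ≤ c)
    (V : Finset (Fin d → ℕ))
    (hbig : 8 * ((d : ℝ) + 1) * (c : ℝ) ≤ ((V.card : ℝ) / ((d : ℝ) + 1)) ^ ((1 : ℝ) / (d : ℝ)))
    (r : ℝ) (hr : 0 < r)
    (W : Finset (Fin d → ℕ)) (hWV : W ⊆ V) (hWne : W.Nonempty)
    (happrox : IsBoxApprox d V W (1 / r)) :
    ∃ (i : Fin d) (x : ℤ),
      ((W.filter fun v => (v i : ℤ) ≤ x - 1).card : ℝ) ≥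
        (W.card : ℝ) * (1 / (4 * ((d : ℝ) + 1)) - 1 / r) ∧
      ((W.filter fun v => x + (c : ℤ) ≤ (v i : ℤ)).card : ℝ) ≥
        (W.card : ℝ) * (1 / (4 * ((d : ℝ) + 1)) - 1 / r) ∧
      ((W.filter fun v => x ≤ (v i : ℤ) ∧ (v i : ℤ) ≤ x + (c : ℤ) - 1).card : ℝ) ≤
        2 * (c : ℝ) * (1 + (d : ℝ)) ^ ((1 : ℝ) / (d : ℝ)) * (W.card : ℝ) *
          ((V.card : ℝ) ^ (-(1 : ℝ) / (d : ℝ)) + 1 / r) :=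
  sample_divider_exists_general d c hd hc V hbig r hr W happrox
end

section
/- Let d ≥ 2 and c ≥ 1 be integers, let V be a finite set of points in ℕ^d, let r > 0 be a real number, and let Ṽ ⊆ V be a nonempty (1/r)-approximation of V with respect to axis-parallel boxes. Suppose a dimension i ∈ {1,…,d} and an integer x satisfy the sample-side bounds: |{ṽ ∈ Ṽ : ṽ_i ≤ x − 1}| ≥ |Ṽ|·(1/(4(d+1)) − 1/r), |{ṽ ∈ Ṽ : ṽ_i ≥ x + c}| ≥ |Ṽ|·(1/(4(d+1)) − 1/r), and |{ṽ ∈ Ṽ : x ≤ ṽ_i ≤ x + c − 1}| ≤ 2c·(1+d)^{1/d}·|Ṽ|·(|V|^{−1/d} + 1/r). Then the same divider satisfies, for the ground set V: |{v ∈ V : v_i ≤ x − 1}| ≥ |V|·(1/(4(d+1)) − 2/r), |{v ∈ V : v_i ≥ x + c}| ≥ |V|·(1/(4(d+1)) − 2/r), and |{v ∈ V : x ≤ v_i ≤ x + c − 1}| ≤ 2c·(1+d)^{1/d}·|V|·(|V|^{−1/d} + 2/r). In particular, if r ≥ 16(d+1) then |{v ∈ V : v_i ≤ x − 1}| ≥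 |V|/(8(d+1)) and |{v ∈ V : v_i ≥ x + c}| ≥ |V|/(8(d+1)), and if additionally r = 2s^{1/d} with |V| > s > 0 then |{v ∈ V : x ≤ v_i ≤ x + c − 1}| ≤ 4c·(1+d)^{1/d}·|V|·s^{−1/d}. -/
/-!
Each of the three parts of a divider `π(i,x)` is, on the points of `V`, an axis-parallel box:
a slab (or half-space) in coordinate `i`, and in every other coordinate the range `[0, M]` with
`M` the largest coordinate occurring in `V`. So the `(1/r)`-approximation property moves each
relative count from `Ṽ` to `V` at a cost of `1/r`; for the boundary this extra `1/r` is absorbed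
by the constant `2c(1+d)^{1/d} ≥ 1`. The two special cases are then plain arithmetic.
-/

open Finset

theorem Finset.exists_coord_le {d : ℕ} (X : Finset (Fin d → ℕ)) :
    ∃ M : ℤ, ∀ v ∈ X, ∀ j, (v j : ℤ) ≤ M :=
  ⟨((X.sup fun v => univ.sup v : ℕ) : ℤ), fun _ hv j => by
    exact_mod_cast (le_sup (mem_univ j)).trans (le_sup (f := fun v => univ.sup v) hv)⟩

namespace IsBoxApprox

variable {d : ℕ} {X X' : Finset (Fin d → ℕ)} {ε : ℝ}

theorem nonneg (h : IsBoxApprox d X X' ε) : 0 ≤ ε :=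
  (abs_nonneg _).trans (h 0 0)

theorem abs_sub_le_of_iff_box (h : IsBoxApprox d X X' ε) (hX' : X' ⊆ X)
    (P : (Fin d → ℕ) → Prop) [DecidablePred P] (lo hi : Fin d → ℤ)
    (hP : ∀ v ∈ X, (∀ j, lo j ≤ (v j : ℤ) ∧ (v j : ℤ) ≤ hi j) ↔ P v) :
    |((X'.filter P).card : ℝ) / X'.card - ((X.filter P).card : ℝ) / X.card| ≤ ε := by
  have hbox := h lo hi
  rwa [filter_congr fun v hv => hP v (hX' hv), filter_congr hP] at hbox

variable (i : Fin d)

theorem abs_sub_le_slab (h : IsBoxApprox d X X' ε) (hX' : X' ⊆ X) (a b : ℤ) :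
    |((X'.filter fun v => a ≤ (v i : ℤ) ∧ (v i : ℤ) ≤ b).card : ℝ) / X'.card -
      ((X.filter fun v => a ≤ (v i : ℤ) ∧ (v i : ℤ) ≤ b).card : ℝ) / X.card| ≤ ε := by
  obtain ⟨M, hM⟩ := X.exists_coord_le
  refine h.abs_sub_le_of_iff_box hX' _ (fun j => if j = i then a else 0)
    (fun j => if j = i then b else M) fun v hv => ⟨fun hbox => by simpa using hbox i, ?_⟩
  intro hslab j
  by_cases hj : j = i
  · subst hj; simpa using hslab
  · simpa [hj] using hM v hv j

theorem abs_sub_le_le (h : IsBoxApprox d X X' ε) (hX' : X' ⊆ X) (b : ℤ) :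
    |((X'.filter fun v => (v i : ℤ) ≤ b).card : ℝ) / X'.card -
      ((X.filter fun v => (v i : ℤ) ≤ b).card : ℝ) / X.card| ≤ ε := by
  simpa using h.abs_sub_le_slab i hX' 0 b

theorem abs_sub_le_ge (h : IsBoxApprox d X X' ε) (hX' : X' ⊆ X) (a : ℤ) :
    |((X'.filter fun v => a ≤ (v i : ℤ)).card : ℝ) / X'.card -
      ((X.filter fun v => a ≤ (v i : ℤ)).card : ℝ) / X.card| ≤ ε := by
  obtain ⟨M, hM⟩ := X.exists_coord_le
  have hslab := h.abs_sub_le_slab i hX' a M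
  rwa [filter_congr fun v hv => and_iff_left (hM v (hX' hv) i),
    filter_congr fun v hv => and_iff_left (hM v hv i)] at hslab

end IsBoxApprox

theorem mul_sub_le_of_abs_div_sub_le_s6 {a a' n n' t ε : ℝ} (hn : 0 < n) (hn' : 0 < n')
    (h : |a' / n' - a / n| ≤ ε) (ha' : n' * t ≤ a') : n * (t - ε) ≤ a := by
  have hfrac : t ≤ a' / n' := by rwa [le_div_iff₀ hn', mul_comm]
  have := (abs_le.mp h).2
  rw [← le_div_iff₀' hn]
  linarith

theorem le_mul_add_of_abs_div_sub_le_s6 {a a' n n' t ε : ℝ} (hn : 0 < n) (hn' : 0 < n')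
    (h : |a' / n' - a / n| ≤ ε) (ha' : a' ≤ n' * t) : a ≤ n * (t + ε) := by
  have hfrac : a' / n' ≤ t := by rwa [div_le_iff₀' hn']
  have := (abs_le.mp h).1
  rw [← div_le_iff₀' hn]
  linarith

theorem one_div_eight_mul_le_sub {D r : ℝ} (hD : 0 < D) (hr : 16 * D ≤ r) :
    1 / (8 * D) ≤ 1 / (4 * D) - 2 / r := by
  have h2r : 2 / r ≤ 1 / (8 * D) := by
    rw [div_le_div_iff₀ (by linarith) (by positivity)]
    linarith
  have hsplit : 1 / (4 * D) = 1 / (8 * D) + 1 / (8 * D) := by field_simp; norm_num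
  linarith

theorem rpow_neg_add_two_div_le {n s p : ℝ} (hs : 0 < s) (hsn : s ≤ n) (hp : 0 ≤ p) :
    n ^ (-p) + 2 / (2 * s ^ p) ≤ 2 * s ^ (-p) := by
  have hn : 0 < n := hs.trans_le hsn
  have hsp : 0 < s ^ p := Real.rpow_pos_of_pos hs p
  have hmono : n ^ (-p) ≤ s ^ (-p) := by
    rw [Real.rpow_neg hn.le, Real.rpow_neg hs.le]
    exact inv_anti₀ hsp (Real.rpow_le_rpow hs.le hsn hp)
  have htwo : 2 / (2 * s ^ p) = s ^ (-p) := by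
    rw [Real.rpow_neg hs.le]; field_simp
  linarith

theorem ground_divider_bounds_general (d c : ℕ) (hc : 1 ≤ c)
    (V : Finset (Fin d → ℕ)) (r : ℝ)
    (W : Finset (Fin d → ℕ)) (hWV : W ⊆ V) (hWne : W.Nonempty)
    (happrox : IsBoxApprox d V W (1 / r))
    (i : Fin d) (x : ℤ)
    (hleft : ((W.filter fun v => (v i : ℤ) ≤ x - 1).card : ℝ) ≥
      (W.card : ℝ) * (1 / (4 * ((d : ℝ) + 1)) - 1 / r))
    (hright : ((W.filter fun v => x + (c : ℤ) ≤ (v i : ℤ)).card : ℝ) ≥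
      (W.card : ℝ) * (1 / (4 * ((d : ℝ) + 1)) - 1 / r))
    (hbound : ((W.filter fun v => x ≤ (v i : ℤ) ∧ (v i : ℤ) ≤ x + (c : ℤ) - 1).card : ℝ) ≤
      2 * (c : ℝ) * (1 + (d : ℝ)) ^ ((1 : ℝ) / (d : ℝ)) * (W.card : ℝ) *
        ((V.card : ℝ) ^ (-(1 : ℝ) / (d : ℝ)) + 1 / r)) :
    ((V.filter fun v => (v i : ℤ) ≤ x - 1).card : ℝ) ≥
      (V.card : ℝ) * (1 / (4 * ((d : ℝ) + 1)) - 2 / r) ∧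
    ((V.filter fun v => x + (c : ℤ) ≤ (v i : ℤ)).card : ℝ) ≥
      (V.card : ℝ) * (1 / (4 * ((d : ℝ) + 1)) - 2 / r) ∧
    ((V.filter fun v => x ≤ (v i : ℤ) ∧ (v i : ℤ) ≤ x + (c : ℤ) - 1).card : ℝ) ≤
      2 * (c : ℝ) * (1 + (d : ℝ)) ^ ((1 : ℝ) / (d : ℝ)) * (V.card : ℝ) *
        ((V.card : ℝ) ^ (-(1 : ℝ) / (d : ℝ)) + 2 / r) ∧
    (16 * ((d : ℝ) + 1) ≤ r →
      ((V.filter fun v => (v i : ℤ) ≤ x - 1).card : ℝ) ≥ (V.card : ℝ) / (8 * ((d : ℝ) + 1)) ∧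
      ((V.filter fun v => x + (c : ℤ) ≤ (v i : ℤ)).card : ℝ) ≥
        (V.card : ℝ) / (8 * ((d : ℝ) + 1))) ∧
    (∀ s : ℝ, 0 < s → s < (V.card : ℝ) → r = 2 * s ^ ((1 : ℝ) / (d : ℝ)) →
      ((V.filter fun v => x ≤ (v i : ℤ) ∧ (v i : ℤ) ≤ x + (c : ℤ) - 1).card : ℝ) ≤
        4 * (c : ℝ) * (1 + (d : ℝ)) ^ ((1 : ℝ) / (d : ℝ)) * (V.card : ℝ) *
          s ^ (-(1 : ℝ) / (d : ℝ))) := by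
  have hW : (0 : ℝ) < W.card := by exact_mod_cast hWne.card_pos
  have hV : (0 : ℝ) < V.card := by exact_mod_cast (hWne.mono hWV).card_pos
  set K : ℝ := 2 * c * (1 + (d : ℝ)) ^ ((1 : ℝ) / d)
  set u : ℝ := (V.card : ℝ) ^ (-(1 : ℝ) / d)
  have hK : 1 ≤ K := by
    have hc' : (1 : ℝ) ≤ c := by exact_mod_cast hc
    have := Real.one_le_rpow (by linarith : (1 : ℝ) ≤ 1 + d) (by positivity : (0 : ℝ) ≤ 1 / d)
    nlinarith
  have h2r : 1 / (4 * ((d : ℝ) + 1)) - 2 / r = 1 / (4 * ((d : ℝ) + 1)) - 1 / r - 1 / r := by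
    ring
  have hL := mul_sub_le_of_abs_div_sub_le_s6 hV hW (happrox.abs_sub_le_le i hWV (x - 1)) hleft
  have hR := mul_sub_le_of_abs_div_sub_le_s6 hV hW (happrox.abs_sub_le_ge i hWV (x + c)) hright
  rw [← h2r] at hL hR
  have hboundary : ((V.filter fun v => x ≤ (v i : ℤ) ∧ (v i : ℤ) ≤ x + c - 1).card : ℝ) ≤
      K * V.card * (u + 2 / r) :=
    calc _ ≤ V.card * (K * (u + 1 / r) + 1 / r) :=
          le_mul_add_of_abs_div_sub_le_s6 hV hW (happrox.abs_sub_le_slab i hWV x (x + c - 1))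
            (hbound.trans_eq (by ring))
      _ ≤ V.card * (K * (u + 1 / r) + K * (1 / r)) := by
          gcongr; exact le_mul_of_one_le_left happrox.nonneg hK
      _ = K * V.card * (u + 2 / r) := by ring
  refine ⟨hL, hR, hboundary, fun h16 => ?_, fun s hs hsV hrs => ?_⟩
  · have he := mul_le_mul_of_nonneg_left
      (one_div_eight_mul_le_sub (by positivity) h16) hV.le
    rw [mul_one_div] at he
    constructor <;> linarith
  · have hs' := rpow_neg_add_two_div_le hs hsV.le (by positivity : (0 : ℝ) ≤ 1 / d)
    rw [← hrs, ← neg_div] at hs'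
    calc _ ≤ K * V.card * (u + 2 / r) := hboundary
      _ ≤ K * V.card * (2 * s ^ (-(1 : ℝ) / d)) := by gcongr
      _ = _ := by ring

/-- If a divider `π(i,x)` satisfies the sample-side bounds with respect
to a `(1/r)`-approximation `Ṽ` of `V`, then the corresponding ground-set bounds hold for
`V` (with `1/r` worsened to `2/r`). In particular, if `r ≥ 16(d+1)` then each side of the
divider contains at least `|V|/(8(d+1))` points, and if additionally `r = 2·s^{1/d}` with
`|V| > s > 0` then the boundary contains at most `4c·(1+d)^{1/d}·|V|·s^{-1/d}` points. -/
theorem ground_divider_bounds (d c : ℕ) (hd : 2 ≤ d) (hc : 1 ≤ c)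
    (V : Finset (Fin d → ℕ)) (r : ℝ) (hr : 0 < r)
    (W : Finset (Fin d → ℕ)) (hWV : W ⊆ V) (hWne : W.Nonempty)
    (happrox : IsBoxApprox d V W (1 / r))
    (i : Fin d) (x : ℤ)
    (hleft : ((W.filter fun v => (v i : ℤ) ≤ x - 1).card : ℝ) ≥
      (W.card : ℝ) * (1 / (4 * ((d : ℝ) + 1)) - 1 / r))
    (hright : ((W.filter fun v => x + (c : ℤ) ≤ (v i : ℤ)).card : ℝ) ≥
      (W.card : ℝ) * (1 / (4 * ((d : ℝ) + 1)) - 1 / r))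
    (hbound : ((W.filter fun v => x ≤ (v i : ℤ) ∧ (v i : ℤ) ≤ x + (c : ℤ) - 1).card : ℝ) ≤
      2 * (c : ℝ) * (1 + (d : ℝ)) ^ ((1 : ℝ) / (d : ℝ)) * (W.card : ℝ) *
        ((V.card : ℝ) ^ (-(1 : ℝ) / (d : ℝ)) + 1 / r)) :
    ((V.filter fun v => (v i : ℤ) ≤ x - 1).card : ℝ) ≥
      (V.card : ℝ) * (1 / (4 * ((d : ℝ) + 1)) - 2 / r) ∧
    ((V.filter fun v => x + (c : ℤ) ≤ (v i : ℤ)).card : ℝ) ≥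
      (V.card : ℝ) * (1 / (4 * ((d : ℝ) + 1)) - 2 / r) ∧
    ((V.filter fun v => x ≤ (v i : ℤ) ∧ (v i : ℤ) ≤ x + (c : ℤ) - 1).card : ℝ) ≤
      2 * (c : ℝ) * (1 + (d : ℝ)) ^ ((1 : ℝ) / (d : ℝ)) * (V.card : ℝ) *
        ((V.card : ℝ) ^ (-(1 : ℝ) / (d : ℝ)) + 2 / r) ∧
    (16 * ((d : ℝ) + 1) ≤ r →
      ((V.filter fun v => (v i : ℤ) ≤ x - 1).card : ℝ) ≥ (V.card : ℝ) / (8 * ((d : ℝ) + 1)) ∧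
      ((V.filter fun v => x + (c : ℤ) ≤ (v i : ℤ)).card : ℝ) ≥
        (V.card : ℝ) / (8 * ((d : ℝ) + 1))) ∧
    (∀ s : ℝ, 0 < s → s < (V.card : ℝ) → r = 2 * s ^ ((1 : ℝ) / (d : ℝ)) →
      ((V.filter fun v => x ≤ (v i : ℤ) ∧ (v i : ℤ) ≤ x + (c : ℤ) - 1).card : ℝ) ≤
        4 * (c : ℝ) * (1 + (d : ℝ)) ^ ((1 : ℝ) / (d : ℝ)) * (V.card : ℝ) *
          s ^ (-(1 : ℝ) / (d : ℝ))) :=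
  ground_divider_bounds_general d c hc V r W hWV hWne happrox i x hleft hright hbound
end

section
/- Let W be a finite vertex set, let T be a tree on W (a connected acyclic simple graph with vertex set W), and let F be an acyclic simple graph on W with exactly k edges. For each edge {u,v} of F, let P_T(u,v) denote the unique path in T from u to v. Then the union, over all edges {u,v} of F, of the edge sets of the paths P_T(u,v) contains at least k edges of T. -/
/-!
Deleting an edge of a forest splits one component into two, so a forest with `k` edges on `n`
vertices has `n - k` components. The edges of `T` covered by the `T`-paths between ends of
`F`-edges span a subforest `H` of `T` in which the two ends of every `F`-edge are connected.
Hence `H` has at most as many components as `F`, and so at least as many edges.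
-/

theorem Nat.card_eq_card_add_one_of_range_eq_compl_singleton {α β : Type*} [Finite β]
    {f : α → β} (hf : Function.Injective f) {b : β} (hrange : Set.range f = {b}ᶜ) :
    Nat.card β = Nat.card α + 1 := by
  have hcompl := Set.ncard_range_of_injective hf
  rw [hrange, Set.ncard_compl, Set.ncard_singleton] at hcompl
  have hpos : 0 < Nat.card β := Nat.card_pos_iff.mpr ⟨⟨b⟩, inferInstance⟩
  omega

namespace SimpleGraph

variable {V : Type*} {G G' : SimpleGraph V}

theorem Reachable.eq_of_forall_adj {β : Sort*} {f : V → β}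
    (hf : ∀ ⦃a b⦄, G.Adj a b → f a = f b) {x y : V} (h : G.Reachable x y) : f x = f y := by
  obtain ⟨p⟩ := h
  induction p with
  | nil => rfl
  | cons hab _ ih => exact (hf hab).trans ih

theorem ConnectedComponent.card_le_card_of_forall_adj_reachable [Finite V]
    (h : ∀ ⦃u v⦄, G.Adj u v → G'.Reachable u v) :
    Nat.card G'.ConnectedComponent ≤ Nat.card G.ConnectedComponent := by
  have hf : ∀ ⦃a b⦄, G.Adj a b → G'.connectedComponentMk a = G'.connectedComponentMk b :=
    fun _ _ hab => ConnectedComponent.sound (h hab)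
  refine Nat.card_le_card_of_surjective
    (ConnectedComponent.lift _ fun _ _ p _ => p.reachable.eq_of_forall_adj hf)
    fun c => c.ind fun v => ⟨G.connectedComponentMk v, rfl⟩

theorem card_connectedComponent_bot :
    Nat.card (⊥ : SimpleGraph V).ConnectedComponent = Nat.card V :=
  (Nat.card_eq_of_bijective _ ⟨fun _ _ h => reachable_bot.mp (ConnectedComponent.exact h),
    fun c => c.ind fun v => ⟨v, rfl⟩⟩).symm

theorem IsBridge.card_connectedComponent_deleteEdges [Finite V] {u v : V} (huv : G.Adj u v)
    (hb : G.IsBridge s(u, v)) :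
    Nat.card (G.deleteEdges {s(u, v)}).ConnectedComponent = Nat.card G.ConnectedComponent + 1 := by
  classical
  set G' := G.deleteEdges {s(u, v)}
  have hG'G : G' ≤ G := deleteEdges_le _
  have huv' : G'.connectedComponentMk u ≠ G'.connectedComponentMk v :=
    fun h => hb (ConnectedComponent.exact h)
  let g : V → G'.ConnectedComponent := fun w =>
    if G'.connectedComponentMk w = G'.connectedComponentMk v then G'.connectedComponentMk u
    else G'.connectedComponentMk w
  have hg : ∀ ⦃a b⦄, G.Adj a b → g a = g b := by
    intro a b hab
    by_cases he : s(a, b) = s(u, v)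
    · rcases Sym2.eq_iff.mp he with ⟨rfl, rfl⟩ | ⟨rfl, rfl⟩ <;> simp [g]
    · have : G'.Adj a b := (deleteEdges_adj ..).mpr ⟨hab, by simpa using he⟩
      simp only [g, ConnectedComponent.sound this.reachable]
  -- `ψ` merges the two sides of the bridge: it is a section of the natural map
  -- `G'.ConnectedComponent → G.ConnectedComponent` whose range misses only the component of `v`
  let ψ : G.ConnectedComponent → G'.ConnectedComponent :=
    ConnectedComponent.lift g fun _ _ p _ => p.reachable.eq_of_forall_adj hg
  have hψ : Function.LeftInverse (ConnectedComponent.map (Hom.ofLE hG'G)) ψ := by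
    refine fun c => c.ind fun w => ?_
    by_cases hw : G'.connectedComponentMk w = G'.connectedComponentMk v
    · simp only [ψ, g, ConnectedComponent.lift_mk, if_pos hw, ConnectedComponent.map_mk]
      exact ConnectedComponent.sound
        (huv.reachable.trans ((ConnectedComponent.exact hw).mono hG'G).symm)
    · simp [ψ, g, hw]
  have hrange : Set.range ψ = {G'.connectedComponentMk v}ᶜ := by
    ext c
    refine c.ind fun w => ?_
    constructor
    · rintro ⟨d, hd⟩
      rw [← hd]
      refine d.ind fun x => ?_
      by_cases hx : G'.connectedComponentMk x = G'.connectedComponentMk v <;>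
        simp [ψ, g, hx, huv']
    · exact fun hw => ⟨G.connectedComponentMk w, if_neg hw⟩
  exact Nat.card_eq_card_add_one_of_range_eq_compl_singleton hψ.injective hrange

theorem IsAcyclic.ncard_edgeSet_add_card_connectedComponent [Finite V] (hG : G.IsAcyclic) :
    G.edgeSet.ncard + Nat.card G.ConnectedComponent = Nat.card V := by
  induction hn : G.edgeSet.ncard generalizing G with
  | zero =>
    obtain rfl : G = ⊥ := edgeSet_eq_empty.mp ((Set.ncard_eq_zero).mp hn)
    rw [card_connectedComponent_bot, zero_add]
  | succ n ih =>
    obtain ⟨e, he⟩ := Set.nonempty_of_ncard_ne_zero (s := G.edgeSet) (by omega)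
    induction e with | h u v =>
    have hbridge := isAcyclic_iff_forall_adj_isBridge.mp hG he
    have hcard : (G.deleteEdges {s(u, v)}).edgeSet.ncard = n := by
      rw [edgeSet_deleteEdges, Set.ncard_sdiff_singleton_of_mem he, hn, Nat.add_sub_cancel]
    have hformula := ih (hG.anti (deleteEdges_le _)) hcard
    rw [hbridge.card_connectedComponent_deleteEdges he] at hformula
    omega

theorem IsAcyclic.ncard_edgeSet_le_of_forall_adj_reachable [Finite V] (hG : G.IsAcyclic)
    (hG' : G'.IsAcyclic) (h : ∀ ⦃u v⦄, G.Adj u v → G'.Reachable u v) :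
    G.edgeSet.ncard ≤ G'.edgeSet.ncard := by
  have hcomp := ConnectedComponent.card_le_card_of_forall_adj_reachable h
  have hformula := hG.ncard_edgeSet_add_card_connectedComponent
  have hformula' := hG'.ncard_edgeSet_add_card_connectedComponent
  omega

end SimpleGraph

/-- Let `T` be a tree on a finite vertex set `W` and `F` an acyclic
simple graph on `W` with exactly `k` edges. The union, over the edges `{u,v}` of `F`, of
the edge sets of the unique `T`-paths from `u` to `v` contains at least `k` edges of `T`. -/
theorem forest_paths_cover_many_tree_edges
    {W : Type*} [Fintype W] (T F : SimpleGraph W)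
    (hT : T.IsTree) (hF : F.IsAcyclic) (k : ℕ) (hk : F.edgeSet.ncard = k) :
    k ≤ {e : Sym2 W | e ∈ T.edgeSet ∧
      ∃ u v : W, F.Adj u v ∧ ∃ p : T.Walk u v, p.IsPath ∧ e ∈ p.edges}.ncard := by
  set S := {e : Sym2 W | e ∈ T.edgeSet ∧
      ∃ u v : W, F.Adj u v ∧ ∃ p : T.Walk u v, p.IsPath ∧ e ∈ p.edges}
  set H := SimpleGraph.fromEdgeSet S
  have hHT : H ≤ T := fun a b hab => (SimpleGraph.fromEdgeSet_adj S).mp hab |>.1.1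
  have hreach : ∀ ⦃u v⦄, F.Adj u v → H.Reachable u v := by
    intro u v huv
    obtain ⟨p, hp⟩ := hT.connected.exists_isPath u v
    refine ⟨p.transfer H fun e he => ?_⟩
    rw [SimpleGraph.edgeSet_fromEdgeSet]
    exact ⟨⟨p.edges_subset_edgeSet he, u, v, huv, p, hp, he⟩,
      T.not_isDiag_of_mem_edgeSet (p.edges_subset_edgeSet he)⟩
  calc k = F.edgeSet.ncard := hk.symm
    _ ≤ H.edgeSet.ncard :=
      hF.ncard_edgeSet_le_of_forall_adj_reachable (hT.isAcyclic.anti hHT) hreach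
    _ ≤ S.ncard := Set.ncard_le_ncard (by simp [H, SimpleGraph.edgeSet_fromEdgeSet])
end

section
/- Let d ≥ 1, let P be a finite set of n ≥ 1 distinct points in ℝ^d, and define the weight of a pair {u,v} ⊆ P as the Euclidean distance dist(u,v). Let T* be a Euclidean minimum spanning tree of P, let ρ > 0, and let T be any spanning tree of the complete graph on P such that for every edge {u,v} of T*, every edge {x,y} on the unique path in T from u to v satisfies dist(x,y) ≤ (1+2ρ)·dist(u,v). Then the total edge weight of T is at most (1+2ρ) times the total edge weight of T*. -/
/-!
Any two spanning trees `T`, `H` of a finite graph admit a bijection `σ` from the edges of `T` to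
those of `H` such that every edge `f` of `T` lies on the `T`-path joining the ends of `σ f`. This
is Hall's theorem: for a set `F` of edges of `T`, deleting `F` from `T` and adding the edges of `H`
whose `T`-path meets `F` leaves a connected graph, and since `T` has one edge fewer than it has
vertices, at least `|F|` edges must have been added. Summing `w f ≤ (1 + 2ρ) w (σ f)` over the
edges of `T` gives the bound.
-/

noncomputable def edgeDist {d : ℕ} (P : Finset (EuclideanSpace ℝ (Fin d))) :
    Sym2 {p // p ∈ P} → ℝ :=
  Sym2.lift ⟨fun u v => dist (u : EuclideanSpace ℝ (Fin d)) (v : EuclideanSpace ℝ (Fin d)),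
    fun u v => dist_comm _ _⟩

open Finset

namespace SimpleGraph

variable {V : Type*} {G H T : SimpleGraph V}

lemma Connected.of_adj_reachable {G' : SimpleGraph V} (hG : G.Connected)
    (h : ∀ ⦃u v⦄, G.Adj u v → G'.Reachable u v) : G'.Connected := by
  refine connected_iff _ |>.mpr ⟨fun u v => ?_, hG.nonempty⟩
  obtain ⟨p⟩ := hG u v
  induction p with
  | nil => rfl
  | cons hadj _ ih => exact (h hadj).trans ih

lemma IsTree.ncard_le_ncard_of_connected_fromEdgeSet [Finite V] (hT : T.IsTree)
    {F N : Set (Sym2 V)} (hF : F ⊆ T.edgeSet)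
    (hconn : (fromEdgeSet (T.edgeSet \ F ∪ N)).Connected) : F.ncard ≤ N.ncard := by
  have hT_card := (isTree_iff_connected_and_card.mp hT).2
  have h_conn_card := hconn.card_vert_le_card_edgeSet_add_one
  rw [Nat.card_coe_set_eq] at hT_card h_conn_card
  have h_sub : (fromEdgeSet (T.edgeSet \ F ∪ N)).edgeSet ⊆ T.edgeSet \ F ∪ N := by
    rw [edgeSet_fromEdgeSet]
    exact Set.sdiff_subset
  have := Set.ncard_le_ncard h_sub
  have := Set.ncard_union_le (T.edgeSet \ F) N
  have := Set.ncard_sdiff hF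
  have := Set.ncard_le_ncard hF
  omega

def OnPathJoining (T : SimpleGraph V) (f e : Sym2 V) : Prop :=
  ∃ u v, s(u, v) = e ∧ ∃ p : T.Walk u v, p.IsPath ∧ f ∈ p.edges

lemma IsTree.ncard_le_ncard_onPathJoining [Finite V] (hT : T.IsTree) (hH : H.Connected)
    {F : Set (Sym2 V)} (hF : F ⊆ T.edgeSet) :
    F.ncard ≤ {e ∈ H.edgeSet | ∃ f ∈ F, T.OnPathJoining f e}.ncard := by
  refine hT.ncard_le_ncard_of_connected_fromEdgeSet hF (hH.of_adj_reachable fun u v huv => ?_)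
  obtain ⟨p, hp⟩ := hT.connected.exists_isPath u v
  by_cases hpF : ∃ f ∈ p.edges, f ∈ F
  · obtain ⟨f, hfp, hfF⟩ := hpF
    exact (fromEdgeSet_adj _ |>.mpr
      ⟨Or.inr ⟨huv, f, hfF, u, v, rfl, p, hp, hfp⟩, huv.ne⟩).reachable
  · push Not at hpF
    refine (p.transfer _ fun e he => ?_).reachable
    have he_T := p.edges_subset_edgeSet he
    rw [edgeSet_fromEdgeSet]
    exact ⟨Or.inl ⟨he_T, hpF e he⟩, T.not_isDiag_of_mem_edgeSet he_T⟩

theorem IsTree.exists_equiv_onPathJoining [Finite V] (hT : T.IsTree) (hH : H.IsTree) :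
    ∃ σ : T.edgeSet ≃ H.edgeSet, ∀ f : T.edgeSet, T.OnPathJoining f (σ f) := by
  classical
  have := Fintype.ofFinite H.edgeSet
  have hall (A : Finset T.edgeSet) : #A ≤ #{e : H.edgeSet | ∃ f ∈ A, T.OnPathJoining f e} := by
    have := hT.ncard_le_ncard_onPathJoining hH.connected
      (F := Subtype.val '' (A : Set T.edgeSet)) (by simp)
    convert this using 1
    · rw [Set.ncard_image_of_injective _ Subtype.val_injective, Set.ncard_coe_finset]
    · rw [← Set.ncard_coe_finset, ← Set.ncard_image_of_injective _ Subtype.val_injective]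
      congr 1
      ext e
      simp [and_comm]
  obtain ⟨σ, hσ_inj, hσ⟩ := (Fintype.all_card_le_filter_rel_iff_exists_injective _).mp hall
  have h_card : Nat.card T.edgeSet = Nat.card H.edgeSet := by
    have := (isTree_iff_connected_and_card.mp hT).2
    have := (isTree_iff_connected_and_card.mp hH).2
    omega
  exact ⟨.ofBijective σ ((Nat.bijective_iff_injective_and_card σ).mpr ⟨hσ_inj, h_card⟩), hσ⟩

theorem IsTree.sum_edgeFinset_le_mul_sum_edgeFinset [Finite V] [Fintype T.edgeSet]
    [Fintype H.edgeSet] {R : Type*} [NonUnitalNonAssocSemiring R] [PartialOrder R]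
    [IsOrderedAddMonoid R] (hT : T.IsTree) (hH : H.IsTree) (w : Sym2 V → R) (c : R)
    (h : ∀ u v, H.Adj u v → ∀ p : T.Walk u v, p.IsPath → ∀ e ∈ p.edges, w e ≤ c * w s(u, v)) :
    ∑ e ∈ T.edgeFinset, w e ≤ c * ∑ e ∈ H.edgeFinset, w e := by
  obtain ⟨σ, hσ⟩ := hT.exists_equiv_onPathJoining hH
  calc ∑ e ∈ T.edgeFinset, w e = ∑ f : T.edgeSet, w f :=
        sum_subtype _ (fun _ => mem_edgeFinset) _
    _ ≤ ∑ f : T.edgeSet, c * w (σ f) := sum_le_sum fun f _ => by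
        obtain ⟨u, v, huv, p, hp, hf⟩ := hσ f
        rw [← huv]
        exact h u v (by rw [← mem_edgeSet, huv]; exact (σ f).2) p hp f hf
    _ = c * ∑ e ∈ H.edgeFinset, w e := by
        rw [← mul_sum, sum_subtype H.edgeFinset (fun _ => mem_edgeFinset),
          σ.sum_comp (fun g => w g)]

end SimpleGraph

open scoped Classical in
theorem emst_overall_approximation_general (d : ℕ)
    (P : Finset (EuclideanSpace ℝ (Fin d)))
    (Tstar T : SimpleGraph {p // p ∈ P})
    (hTstar : Tstar.IsTree) (hT : T.IsTree)
    (ρ : ℝ)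
    (happrox : ∀ u v : {p // p ∈ P}, Tstar.Adj u v →
      ∀ p : T.Walk u v, p.IsPath → ∀ e ∈ p.edges,
        edgeDist P e ≤ (1 + 2 * ρ) *
          dist (u : EuclideanSpace ℝ (Fin d)) (v : EuclideanSpace ℝ (Fin d))) :
    ∑ e ∈ T.edgeFinset, edgeDist P e ≤ (1 + 2 * ρ) * ∑ e ∈ Tstar.edgeFinset, edgeDist P e :=
  hT.sum_edgeFinset_le_mul_sum_edgeFinset hTstar (edgeDist P) (1 + 2 * ρ) happrox

open scoped Classical in
/-- **Overall approximation from edge-wise approximation.** If `T*` is a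
Euclidean minimum spanning tree of `P` and `T` is a spanning tree such that for every edge
`{u,v}` of `T*`, every edge on the unique `T`-path from `u` to `v` has weight at most
`(1+2ρ)·dist(u,v)`, then the total weight of `T` is at most `(1+2ρ)` times that of `T*`. -/
theorem emst_overall_approximation (d : ℕ) (hd : 1 ≤ d)
    (P : Finset (EuclideanSpace ℝ (Fin d))) (hP : P.Nonempty)
    (Tstar T : SimpleGraph {p // p ∈ P})
    (hTstar : Tstar.IsTree) (hT : T.IsTree)
    (hmin : ∀ T' : SimpleGraph {p // p ∈ P}, T'.IsTree →
      ∑ e ∈ Tstar.edgeFinset, edgeDist P e ≤ ∑ e ∈ T'.edgeFinset, edgeDist P e)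
    (ρ : ℝ) (hρ : 0 < ρ)
    (happrox : ∀ u v : {p // p ∈ P}, Tstar.Adj u v →
      ∀ p : T.Walk u v, p.IsPath → ∀ e ∈ p.edges,
        edgeDist P e ≤ (1 + 2 * ρ) *
          dist (u : EuclideanSpace ℝ (Fin d)) (v : EuclideanSpace ℝ (Fin d))) :
    ∑ e ∈ T.edgeFinset, edgeDist P e ≤ (1 + 2 * ρ) * ∑ e ∈ Tstar.edgeFinset, edgeDist P e :=
  emst_overall_approximation_general d P Tstar T hTstar hT ρ happrox
end
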